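/- arXiv:1401.6823 — 10 statements merged into one kernel-verified Lean document; each statement's English description precedes it below -/
import Mathlib

section
/- Let N ≥ 1, and let n, K be natural numbers with n ≤ N and K ≤ N. Set p = K/N as a real number, and let c ≥ 1 be a real number. Then Σ_{t=0}^{n} c^t · C(K,t)·C(N−K, n−t) / C(N,n) ≤ Σ_{t=0}^{n} c^t · C(n,t)·p^t·(1−p)^{n−t}. (This is the statement that E(c^Z) ≤ E(c^Y) for a hypergeometric random variable Z ∼ Hypergeom(N, K, n) and a binomial random variable Y ∼ Binom(n, K/N).) -/
/-!
Write `c = 1 + d` with `d ≥ 0` and expand `c ^ t = ∑ₖ dᵏ C(t,k)`: each side becomes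
`∑ₖ dᵏ E[C(X,k)]`, a combination of factorial moments with nonnegative coefficients. For the
binomial `E[C(Y,k)] = C(n,k) pᵏ`, while for the hypergeometric Vandermonde's identity gives
`E[C(Z,k)] = C(K,k) C(N-k,n-k) / C(N,n) = C(n,k) C(K,k) / C(N,k)`, and `C(K,k) / C(N,k)` is a
product of the factors `(K-i)/(N-i) ≤ K/N`.
-/

open Finset

theorem Nat.descFactorial_mul_pow_le {K N : ℕ} (hK : K ≤ N) (k : ℕ) :
    K.descFactorial k * N ^ k ≤ N.descFactorial k * K ^ k := by
  induction k with
  | zero => simp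
  | succ k ih =>
    have hstep : (K - k) * N ≤ (N - k) * K := by
      rw [Nat.sub_mul, Nat.sub_mul, Nat.mul_comm K N]
      exact Nat.sub_le_sub_left (Nat.mul_le_mul_left k hK) _
    calc K.descFactorial (k + 1) * N ^ (k + 1)
        = ((K - k) * N) * (K.descFactorial k * N ^ k) := by
          rw [Nat.descFactorial_succ, pow_succ]; ring
      _ ≤ ((N - k) * K) * (N.descFactorial k * K ^ k) := Nat.mul_le_mul hstep ih
      _ = N.descFactorial (k + 1) * K ^ (k + 1) := by
          rw [Nat.descFactorial_succ, pow_succ]; ring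

theorem Nat.choose_mul_pow_le {K N : ℕ} (hK : K ≤ N) (k : ℕ) :
    K.choose k * N ^ k ≤ N.choose k * K ^ k := by
  have h := Nat.descFactorial_mul_pow_le hK k
  rw [Nat.descFactorial_eq_factorial_mul_choose, Nat.descFactorial_eq_factorial_mul_choose,
    mul_assoc, mul_assoc] at h
  exact Nat.le_of_mul_le_mul_left h k.factorial_pos

theorem Nat.sum_choose_mul_choose_mul_choose (a b : ℕ) {k n : ℕ} (hk : k ≤ n) :
    ∑ t ∈ range (n + 1), t.choose k * (a.choose t * b.choose (n - t)) =
      a.choose k * (a + b - k).choose (n - k) := by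
  have hsplit : n + 1 = k + (n - k + 1) := by omega
  rw [hsplit, sum_range_add, sum_eq_zero fun t ht => by
    rw [Nat.choose_eq_zero_of_lt (mem_range.1 ht), zero_mul], zero_add]
  have hterm : ∀ s ∈ range (n - k + 1),
      (k + s).choose k * (a.choose (k + s) * b.choose (n - (k + s))) =
        a.choose k * ((a - k).choose s * b.choose (n - k - s)) := by
    intro s _
    rw [mul_left_comm, ← mul_assoc, Nat.choose_mul (Nat.le_add_right k s),
      Nat.add_sub_cancel_left, Nat.sub_add_eq, mul_assoc]
  rw [sum_congr rfl hterm, ← mul_sum, ← Nat.sum_antidiagonal_eq_sum_range_succ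
    (fun i j => (a - k).choose i * b.choose j), ← Nat.add_choose_eq]
  rcases le_or_gt k a with h | h
  · rw [Nat.sub_add_comm h]
  · rw [Nat.choose_eq_zero_of_lt h, zero_mul, zero_mul]

section CommRing

variable {R : Type*} [CommRing R]

theorem sum_range_pow_mul_eq_sum_sub_one_pow_mul (c : R) (w : ℕ → R) (n : ℕ) :
    ∑ t ∈ range (n + 1), c ^ t * w t =
      ∑ k ∈ range (n + 1), (c - 1) ^ k * ∑ t ∈ range (n + 1), (t.choose k : R) * w t := by
  have hpow : ∀ t ∈ range (n + 1), c ^ t = ∑ k ∈ range (n + 1), (c - 1) ^ k * t.choose k := by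
    intro t ht
    conv_lhs => rw [← sub_add_cancel c 1, add_pow]
    simp only [one_pow, mul_one]
    refine sum_subset (range_subset_range.2 (mem_range.1 ht)) fun k _ hk => ?_
    rw [Nat.choose_eq_zero_of_lt (by simpa using hk), Nat.cast_zero, mul_zero]
  rw [sum_congr rfl fun t ht => by rw [hpow t ht, sum_mul], sum_comm]
  simp only [mul_sum, mul_assoc]

theorem sum_range_pow_mul_choose_mul_pow_mul_one_sub_pow (c p : R) (n : ℕ) :
    ∑ t ∈ range (n + 1), c ^ t * (n.choose t : R) * p ^ t * (1 - p) ^ (n - t) =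
      ∑ k ∈ range (n + 1), (c - 1) ^ k * ((n.choose k : R) * p ^ k) := by
  calc ∑ t ∈ range (n + 1), c ^ t * (n.choose t : R) * p ^ t * (1 - p) ^ (n - t)
      = (c * p + (1 - p)) ^ n := by
        rw [add_pow]; exact sum_congr rfl fun t _ => by ring
    _ = ((c - 1) * p + 1) ^ n := by ring
    _ = _ := by
        rw [add_pow]; exact sum_congr rfl fun k _ => by rw [mul_pow]; ring

end CommRing

theorem choose_mul_choose_div_choose_le {N n K k : ℕ} (hn : n ≤ N) (hK : K ≤ N) (hk : k ≤ n) :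
    ((K.choose k * (N - k).choose (n - k) : ℕ) : ℝ) / N.choose n ≤
      n.choose k * ((K : ℝ) / N) ^ k := by
  have hNk : (0 : ℝ) < (N : ℝ) ^ k := by
    rcases k.eq_zero_or_pos with rfl | hk0
    · simp
    · exact pow_pos (by exact_mod_cast hk0.trans_le (hk.trans hn)) k
  have key : K.choose k * (N - k).choose (n - k) * N ^ k ≤ n.choose k * K ^ k * N.choose n :=
    calc K.choose k * (N - k).choose (n - k) * N ^ k
        = K.choose k * N ^ k * (N - k).choose (n - k) := by ring
      _ ≤ N.choose k * K ^ k * (N - k).choose (n - k) :=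
          Nat.mul_le_mul_right _ (Nat.choose_mul_pow_le hK k)
      _ = N.choose n * n.choose k * K ^ k := by rw [Nat.choose_mul hk]; ring
      _ = n.choose k * K ^ k * N.choose n := by ring
  rw [div_pow, ← mul_div_assoc, div_le_div_iff₀ (by exact_mod_cast Nat.choose_pos hn) hNk]
  exact_mod_cast key

theorem stmt1_general (N n K : ℕ) (hn : n ≤ N) (hK : K ≤ N)
    (c : ℝ) (hc : 1 ≤ c) :
    ∑ t ∈ Finset.range (n + 1),
        c ^ t * ((K.choose t * (N - K).choose (n - t) : ℕ) : ℝ) / (N.choose n : ℝ) ≤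
    ∑ t ∈ Finset.range (n + 1),
        c ^ t * (n.choose t : ℝ) * ((K : ℝ) / (N : ℝ)) ^ t *
          (1 - (K : ℝ) / (N : ℝ)) ^ (n - t) := by
  rw [← sum_div, sum_range_pow_mul_eq_sum_sub_one_pow_mul,
    sum_range_pow_mul_choose_mul_pow_mul_one_sub_pow, sum_div]
  refine sum_le_sum fun k hk => ?_
  have hkn : k ≤ n := Nat.lt_succ_iff.1 (mem_range.1 hk)
  have hmoment := Nat.sum_choose_mul_choose_mul_choose K (N - K) hkn
  rw [Nat.add_sub_cancel' hK] at hmoment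
  simp only [← Nat.cast_mul, ← Nat.cast_sum, hmoment, mul_div_assoc]
  exact mul_le_mul_of_nonneg_left (choose_mul_choose_div_choose_le hn hK hkn)
    (pow_nonneg (sub_nonneg.2 hc) k)

theorem stmt1 (N n K : ℕ) (hN : 1 ≤ N) (hn : n ≤ N) (hK : K ≤ N)
    (c : ℝ) (hc : 1 ≤ c) :
    ∑ t ∈ Finset.range (n + 1),
        c ^ t * ((K.choose t * (N - K).choose (n - t) : ℕ) : ℝ) / (N.choose n : ℝ) ≤
    ∑ t ∈ Finset.range (n + 1),
        c ^ t * (n.choose t : ℝ) * ((K : ℝ) / (N : ℝ)) ^ t *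
          (1 - (K : ℝ) / (N : ℝ)) ^ (n - t) :=
  stmt1_general N n K hn hK c hc
end

section
/- For all natural numbers N, K, n, k with K ≤ N, n ≤ N and k ≤ n, the identity Σ_{t=0}^{n} C(t,k)·C(K,t)·C(N−K, n−t) = C(K,k)·C(N−k, n−k) holds. (Dividing by C(N,n), this computes the k-th binomial moment E(C(Z,k)) = C(n,k)·C(K,k)/C(N,k) of a hypergeometric random variable Z ∼ Hypergeom(N, K, n).) -/
/-!
Choosing a `t`-subset of a `K`-set and then a `k`-subset of it is the same as choosing the
`k`-subset first and then the remaining `t - k` elements among the other `K - k`: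
`C(t,k) C(K,t) = C(K,k) C(K-k, t-k)`. After pulling out `C(K,k)`, the sum is Vandermonde's
convolution `∑ₛ C(K-k, s) C(N-K, n-k-s) = C(N-k, n-k)`.
-/

open Finset

namespace Nat

theorem sum_range_choose_mul_choose_sub (a b m : ℕ) :
    ∑ s ∈ range (m + 1), a.choose s * b.choose (m - s) = (a + b).choose m := by
  rw [add_choose_eq, Finset.Nat.sum_antidiagonal_eq_sum_range_succ_mk]

theorem sum_range_choose_mul_choose_mul_choose {K L n k : ℕ} (hk : k ≤ n) :
    ∑ t ∈ range (n + 1), t.choose k * (K.choose t * L.choose (n - t)) =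
      K.choose k * (K - k + L).choose (n - k) := by
  obtain ⟨m, rfl⟩ := Nat.exists_eq_add_of_le hk
  have below_k : ∑ t ∈ range k, t.choose k * (K.choose t * L.choose (k + m - t)) = 0 :=
    sum_eq_zero fun t ht => by rw [choose_eq_zero_of_lt (mem_range.mp ht), zero_mul]
  calc ∑ t ∈ range (k + m + 1), t.choose k * (K.choose t * L.choose (k + m - t))
      = ∑ s ∈ range (m + 1),
          (k + s).choose k * (K.choose (k + s) * L.choose (k + m - (k + s))) := by
        rw [add_assoc, sum_range_add, below_k, zero_add]
    _ = ∑ s ∈ range (m + 1), K.choose k * ((K - k).choose s * L.choose (m - s)) := by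
        refine sum_congr rfl fun s _ => ?_
        rw [← mul_assoc, mul_comm ((k + s).choose k), choose_mul (le_add_right k s),
          Nat.add_sub_cancel_left, Nat.add_sub_add_left, mul_assoc]
    _ = K.choose k * (K - k + L).choose (k + m - k) := by
        rw [← mul_sum, sum_range_choose_mul_choose_sub, Nat.add_sub_cancel_left]

end Nat

theorem stmt2_general (N K n k : ℕ) (hK : K ≤ N) (hk : k ≤ n) :
    ∑ t ∈ Finset.range (n + 1),
        t.choose k * (K.choose t * (N - K).choose (n - t)) =
      K.choose k * (N - k).choose (n - k) := by
  rw [Nat.sum_range_choose_mul_choose_mul_choose hk]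
  rcases le_or_gt k K with hkK | hKk
  · rw [show K - k + (N - K) = N - k by omega]
  · rw [Nat.choose_eq_zero_of_lt hKk, zero_mul, zero_mul]

theorem stmt2 (N K n k : ℕ) (hK : K ≤ N) (hn : n ≤ N) (hk : k ≤ n) :
    ∑ t ∈ Finset.range (n + 1),
        t.choose k * (K.choose t * (N - K).choose (n - t)) =
      K.choose k * (N - k).choose (n - k) :=
  stmt2_general N K n k hK hk
end

section
/- Let n ≥ 2 and k ≥ 2 be integers with k ≤ n, let b be a natural number with b ≤ C(n,2), and set p = b/C(n,2) as a real number. If n^k · ((1+p)/2)^{k(k−1)/2} < 1, then there exists a semicomplete digraph on n vertices with exactly b bioriented pairs that contains no transitive subtournament on k vertices. (This yields the bound F_p(n) < (2/log₂(2/(1+p)))·log₂ n + 1 of Theorem 2.4.) -/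
/-- A semicomplete digraph on `{0,…,n-1}`: loopless, and for every pair of
distinct vertices at least one of the two arcs is present. -/
structure SemicompleteDigraph (n : ℕ) where
  arc : Fin n → Fin n → Bool
  loopless : ∀ i, arc i i = false
  total : ∀ i j, i ≠ j → arc i j = true ∨ arc j i = true

/-- The number of bioriented unordered pairs (both arcs present). -/
def SemicompleteDigraph.biorientedCount {n : ℕ} (G : SemicompleteDigraph n) : ℕ :=
  (Finset.univ.filter fun p : Fin n × Fin n =>
    p.1 < p.2 ∧ G.arc p.1 p.2 = true ∧ G.arc p.2 p.1 = true).card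

/-- The number of one-way unordered pairs (exactly one arc present). -/
def SemicompleteDigraph.oneWayCount {n : ℕ} (G : SemicompleteDigraph n) : ℕ :=
  (Finset.univ.filter fun p : Fin n × Fin n =>
    p.1 < p.2 ∧ ¬(G.arc p.1 p.2 = true ∧ G.arc p.2 p.1 = true)).card

/-- `S` carries a transitive subtournament: there is a linear ordering of `S` such
that the arc `(u,v)` is present whenever `u` precedes `v`. -/
def SemicompleteDigraph.HasTransTournOn {n : ℕ} (G : SemicompleteDigraph n)
    (S : Finset (Fin n)) : Prop :=
  ∃ l : List (Fin n), l.Nodup ∧ l.toFinset = S ∧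
    l.Pairwise fun u v => G.arc u v = true

/-!
Random construction. Choose the set `B` of bioriented pairs uniformly among the `b`-subsets of
the `N = C(n,2)` pairs and orient every other pair by a fair coin `σ`. An ordering `f` of `k`
vertices is transitive only if every pair `q` it spans lies in `B` or is oriented by `σ` along `f`,
i.e. only if the disagreement set `D(σ)` of `σ` with `f` lies in `B`. At most a fraction `p^|D|`
of the `b`-subsets contain a given `D`, and summing `p^|D(σ)|` over `σ` factors pair by pair into
`(1 + p)^C(k,2) 2^(n² - C(k,2))`. So each ordering is transitive for at most a fraction
`((1 + p) / 2)^C(k,2)` of the pairs `(B, σ)`, and the union bound over at most `n^k` orderings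
leaves a pair `(B, σ)` with no transitive subtournament on `k` vertices.
-/

open Finset

theorem Nat.descFactorial_mul_pow_le_pow_mul_descFactorial {b N : ℕ} (h : b ≤ N) (j : ℕ) :
    b.descFactorial j * N ^ j ≤ b ^ j * N.descFactorial j := by
  induction j with
  | zero => simp
  | succ j ih =>
    have step : (b - j) * N ≤ b * (N - j) := by
      rw [Nat.sub_mul, Nat.mul_sub, Nat.mul_comm b j]
      exact Nat.sub_le_sub_left (Nat.mul_le_mul_left j h) _
    calc b.descFactorial (j + 1) * N ^ (j + 1)
        = b.descFactorial j * N ^ j * ((b - j) * N) := by rw [Nat.descFactorial_succ]; ring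
      _ ≤ b ^ j * N.descFactorial j * (b * (N - j)) := Nat.mul_le_mul ih step
      _ = b ^ (j + 1) * N.descFactorial (j + 1) := by rw [Nat.descFactorial_succ]; ring

theorem Nat.choose_sub_mul_pow_le {j b N : ℕ} (hjb : j ≤ b) (hbN : b ≤ N) :
    (N - j).choose (b - j) * N ^ j ≤ b ^ j * N.choose b := by
  have hpos : 0 < N.descFactorial j := Nat.descFactorial_pos.mpr (hjb.trans hbN)
  refine Nat.le_of_mul_le_mul_right ?_ hpos
  have hmul : N.choose b * b.descFactorial j = N.descFactorial j * (N - j).choose (b - j) := by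
    rw [Nat.descFactorial_eq_factorial_mul_choose, Nat.descFactorial_eq_factorial_mul_choose,
      Nat.mul_left_comm, Nat.choose_mul hjb, Nat.mul_assoc]
  calc (N - j).choose (b - j) * N ^ j * N.descFactorial j
      = N.choose b * (b.descFactorial j * N ^ j) := by rw [← Nat.mul_assoc, hmul]; ring
    _ ≤ N.choose b * (b ^ j * N.descFactorial j) :=
        Nat.mul_le_mul_left _ (Nat.descFactorial_mul_pow_le_pow_mul_descFactorial hbN j)
    _ = b ^ j * N.choose b * N.descFactorial j := by ring

theorem Finset.card_filter_powersetCard_subset_le {α : Type*} [DecidableEq α]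
    {S P : Finset α} (hSP : S ⊆ P) {b : ℕ} (hb : b ≤ #P) :
    (#{B ∈ P.powersetCard b | S ⊆ B} : ℝ) ≤ ((b : ℝ) / #P) ^ #S * (#P).choose b := by
  by_cases hSb : #S ≤ b
  · rw [card_filter_powersetCard_subset S P b hSP hSb]
    rcases (#P).eq_zero_or_pos with hP | hP
    · have : #S = 0 := by omega
      simp [this, hP, show b = 0 by omega]
    rw [div_pow, div_mul_eq_mul_div, le_div_iff₀ (by positivity)]
    exact_mod_cast Nat.choose_sub_mul_pow_le hSb hb
  · rw [filter_false_of_mem fun B hB hSB =>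
      hSb ((card_le_card hSB).trans (mem_powersetCard.1 hB).2.le)]
    simp only [card_empty, Nat.cast_zero]
    positivity

theorem Finset.sum_pow_card_filter_ne {α R : Type*} [Fintype α] [DecidableEq α]
    [CommSemiring R] (M : Finset α) (τ : α → Bool) (x : R) :
    ∑ σ : α → Bool, x ^ #{q ∈ M | σ q ≠ τ q} = (1 + x) ^ #M * 2 ^ #Mᶜ := by
  let g : α → Bool → R := fun q y => if q ∈ M ∧ y ≠ τ q then x else 1
  have hterm (σ : α → Bool) : x ^ #{q ∈ M | σ q ≠ τ q} = ∏ q, g q (σ q) := by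
    rw [prod_ite, prod_const_one, mul_one, prod_const]
    congr 2
    ext q
    simp
  have hfactor (q : α) : ∑ y, g q y = if q ∈ M then 1 + x else 2 := by
    by_cases hq : q ∈ M <;> cases h : τ q <;> simp [g, hq, h, one_add_one_eq_two, add_comm]
  simp_rw [hterm, ← Fintype.prod_sum, hfactor]
  rw [prod_ite, prod_const, prod_const, filter_mem_eq_inter, univ_inter, filter_notMem_eq_sdiff,
    ← compl_eq_univ_sdiff]

def ltPairs {α : Type*} [LinearOrder α] (s : Finset α) : Finset (α × α) :=
  {x ∈ s ×ˢ s | x.1 < x.2}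

theorem card_ltPairs {α : Type*} [LinearOrder α] (s : Finset α) :
    #(ltPairs s) = (#s).choose 2 :=
  card_product_filter_lt

theorem ltPairs_mono {α : Type*} [LinearOrder α] {s t : Finset α} (h : s ⊆ t) :
    ltPairs s ⊆ ltPairs t :=
  filter_subset_filter _ (product_subset_product h h)

namespace SemicompleteDigraph

variable {n : ℕ}

/-- The pairs of `B`, stored as `(min, max)`, are bioriented; any other pair `(u, v)` with `u < v`
is oriented `u → v` if `σ (u, v)` holds and `v → u` otherwise. -/
def ofOrientation (B : Finset (Fin n × Fin n)) (σ : Fin n × Fin n → Bool) :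
    SemicompleteDigraph n where
  arc u v :=
    decide (u ≠ v ∧ ((min u v, max u v) ∈ B ∨ σ (min u v, max u v) = decide (u < v)))
  loopless u := by simp
  total u v huv := by
    rcases huv.lt_or_gt with h | h
    · cases hσ : σ (u, v) <;> simp [huv, huv.symm, h, h.le, h.not_gt, hσ]
    · cases hσ : σ (v, u) <;> simp [huv, huv.symm, h, h.le, h.not_gt, hσ]

theorem biorientedCount_ofOrientation {B : Finset (Fin n × Fin n)} (hB : B ⊆ ltPairs univ)
    (σ : Fin n × Fin n → Bool) : (ofOrientation B σ).biorientedCount = #B := by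
  unfold biorientedCount
  congr 1
  ext ⟨u, v⟩
  constructor
  · cases hσ : σ (u, v) <;>
      simp +contextual [ofOrientation, ne_of_lt, le_of_lt, not_lt_of_gt, hσ]
  · intro huv
    have : u < v := by simpa [ltPairs] using hB huv
    simp [ofOrientation, this, this.ne, this.ne', this.le, huv]

def increasingOrientation {k : ℕ} (f : Fin k ↪ Fin n) (q : Fin n × Fin n) : Bool :=
  decide (∃ i j, i < j ∧ f i = q.1 ∧ f j = q.2)

theorem filter_ne_increasingOrientation_subset {k : ℕ} (f : Fin k ↪ Fin n)
    {B : Finset (Fin n × Fin n)} {σ : Fin n × Fin n → Bool}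
    (harc : ∀ i j, i < j → (ofOrientation B σ).arc (f i) (f j) = true) :
    {q ∈ ltPairs (univ.map f) | σ q ≠ increasingOrientation f q} ⊆ B := by
  rintro ⟨u, v⟩ hq
  simp only [ltPairs, mem_filter, mem_product, mem_map, mem_univ, true_and] at hq
  obtain ⟨⟨⟨⟨a, rfl⟩, b, rfl⟩, hab⟩, hσ⟩ := hq
  rcases lt_trichotomy a b with h | rfl | h
  · have hτ : increasingOrientation f (f a, f b) = true := decide_eq_true ⟨a, b, h, rfl, rfl⟩
    have := harc a b h
    simp_all [ofOrientation, hab.ne, hab.le]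
  · exact absurd hab (lt_irrefl _)
  · have hτ : increasingOrientation f (f a, f b) = false := by
      simp only [increasingOrientation, decide_eq_false_iff_not, not_exists, not_and]
      intro i j hij hi hj
      rw [f.injective hi, f.injective hj] at hij
      exact lt_asymm h hij
    have := harc b a h
    simp_all [ofOrientation, hab.ne', hab.le, hab.not_gt]

theorem HasTransTournOn.exists_embedding {G : SemicompleteDigraph n} {S : Finset (Fin n)}
    (hS : G.HasTransTournOn S) :
    ∃ f : Fin #S ↪ Fin n, ∀ i j, i < j → G.arc (f i) (f j) = true := by
  obtain ⟨l, hl, rfl, hpw⟩ := hS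
  have hlen : l.length = #l.toFinset := (List.toFinset_card_of_nodup hl).symm
  refine ⟨⟨fun i => l.get (i.cast hlen.symm), ?_⟩, fun i j hij => ?_⟩
  · exact (List.nodup_iff_injective_get.mp hl).comp (Fin.cast_injective _)
  · exact List.pairwise_iff_get.mp hpw _ _ hij

end SemicompleteDigraph

open SemicompleteDigraph

/-- `σ` is recorded on all ordered pairs, although only its values on `ltPairs univ` matter. -/
def orientations (n b : ℕ) : Finset (Finset (Fin n × Fin n) × (Fin n × Fin n → Bool)) :=
  (ltPairs univ).powersetCard b ×ˢ univ

def orientationsIncreasingAlong {n k : ℕ} (b : ℕ) (f : Fin k ↪ Fin n) :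
    Finset (Finset (Fin n × Fin n) × (Fin n × Fin n → Bool)) :=
  {c ∈ orientations n b | ∀ i j, i < j → (ofOrientation c.1 c.2).arc (f i) (f j) = true}

theorem card_orientations (n b : ℕ) :
    #(orientations n b) = (n.choose 2).choose b * 2 ^ (n * n) := by
  simp [orientations, card_ltPairs]

theorem card_orientationsIncreasingAlong_le {n k b : ℕ} (hb : b ≤ n.choose 2)
    (f : Fin k ↪ Fin n) :
    (#(orientationsIncreasingAlong b f) : ℝ)
      ≤ (n.choose 2).choose b * ((1 + (b : ℝ) / n.choose 2) / 2) ^ k.choose 2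
        * 2 ^ (n * n) := by
  set P : Finset (Fin n × Fin n) := ltPairs univ
  set M : Finset (Fin n × Fin n) := ltPairs (univ.map f)
  set D : (Fin n × Fin n → Bool) → Finset (Fin n × Fin n) :=
    fun σ => {q ∈ M | σ q ≠ increasingOrientation f q}
  set p : ℝ := (b : ℝ) / n.choose 2
  have hP : #P = n.choose 2 := by simp [P, card_ltPairs]
  have hM : #M = k.choose 2 := by simp [M, card_ltPairs]
  have hDP (σ) : D σ ⊆ P := (filter_subset _ _).trans (ltPairs_mono (subset_univ _))
  have hsub : orientationsIncreasingAlong b f ⊆ {c ∈ orientations n b | D c.2 ⊆ c.1} :=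
    fun c hc => by
      simp only [orientationsIncreasingAlong, mem_filter] at hc ⊢
      exact ⟨hc.1, filter_ne_increasingOrientation_subset f hc.2⟩
  have hfiber :
      #{c ∈ orientations n b | D c.2 ⊆ c.1}
        = ∑ σ, #{B ∈ P.powersetCard b | D σ ⊆ B} := by
    simp only [orientations, card_filter, sum_product_right]
    rfl
  calc (#(orientationsIncreasingAlong b f) : ℝ)
      ≤ ∑ σ, (#{B ∈ P.powersetCard b | D σ ⊆ B} : ℝ) := by
        exact_mod_cast (card_le_card hsub).trans hfiber.le
    _ ≤ ∑ σ, p ^ #(D σ) * (n.choose 2).choose b := by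
        gcongr with σ
        simpa only [hP] using card_filter_powersetCard_subset_le (hDP σ) (hP ▸ hb)
    _ = (n.choose 2).choose b * ((1 + p) ^ #M * 2 ^ #Mᶜ) := by
        rw [← sum_mul, sum_pow_card_filter_ne, mul_comm]
    _ = (n.choose 2).choose b * ((1 + p) / 2) ^ k.choose 2 * 2 ^ (n * n) := by
        have hsplit : k.choose 2 + #Mᶜ = n * n := by
          rw [← hM, card_add_card_compl, Fintype.card_prod, Fintype.card_fin]
        rw [← hsplit, div_pow, pow_add, hM]
        field_simp

theorem sum_card_orientationsIncreasingAlong_lt {n k b : ℕ} (hb : b ≤ n.choose 2)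
    (h : (n : ℝ) ^ k * ((1 + (b : ℝ) / n.choose 2) / 2) ^ (k * (k - 1) / 2) < 1) :
    ∑ f : Fin k ↪ Fin n, #(orientationsIncreasingAlong b f) < #(orientations n b) := by
  have hpos : (0 : ℝ) < (n.choose 2).choose b * 2 ^ (n * n) := by
    have := Nat.choose_pos hb
    positivity
  suffices
      ∑ f : Fin k ↪ Fin n, (#(orientationsIncreasingAlong b f) : ℝ) < #(orientations n b) by
    exact_mod_cast this
  calc ∑ f : Fin k ↪ Fin n, (#(orientationsIncreasingAlong b f) : ℝ)
      ≤ (n ^ k : ℕ) * ((n.choose 2).choose b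
          * ((1 + (b : ℝ) / n.choose 2) / 2) ^ k.choose 2 * 2 ^ (n * n)) := by
        grw [sum_le_card_nsmul _ _ _ fun f _ => card_orientationsIncreasingAlong_le hb f,
          nsmul_eq_mul, card_univ, Fintype.card_embedding_eq, Fintype.card_fin,
          Fintype.card_fin, Nat.descFactorial_le_pow]
    _ = ((n : ℝ) ^ k * ((1 + (b : ℝ) / n.choose 2) / 2) ^ (k * (k - 1) / 2))
          * ((n.choose 2).choose b * 2 ^ (n * n)) := by
        rw [Nat.choose_two_right k]; push_cast; ring
    _ < #(orientations n b) := by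
        rw [card_orientations]; push_cast
        exact mul_lt_of_lt_one_left hpos h

theorem stmt5_general (n k b : ℕ)
    (hb : b ≤ n.choose 2)
    (h : (n : ℝ) ^ k * ((1 + (b : ℝ) / (n.choose 2 : ℝ)) / 2) ^ (k * (k - 1) / 2) < 1) :
    ∃ G : SemicompleteDigraph n, G.biorientedCount = b ∧
      ∀ S : Finset (Fin n), S.card = k → ¬ G.HasTransTournOn S := by
  have hunion : #((univ : Finset (Fin k ↪ Fin n)).biUnion (orientationsIncreasingAlong b))
      < #(orientations n b) :=
    card_biUnion_le.trans_lt (sum_card_orientationsIncreasingAlong_lt hb h)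
  obtain ⟨c, hc, hgood⟩ := exists_mem_notMem_of_card_lt_card hunion
  obtain ⟨hcP, hcb⟩ := mem_powersetCard.1 (mem_product.1 hc).1
  refine ⟨ofOrientation c.1 c.2, by rw [biorientedCount_ofOrientation hcP, hcb], ?_⟩
  intro S hS htrans
  obtain ⟨f, hf⟩ := htrans.exists_embedding
  subst hS
  exact hgood (mem_biUnion.2 ⟨f, mem_univ _, mem_filter.2 ⟨hc, hf⟩⟩)

theorem stmt5 (n k b : ℕ) (hn : 2 ≤ n) (hk : 2 ≤ k) (hkn : k ≤ n)
    (hb : b ≤ n.choose 2)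
    (h : (n : ℝ) ^ k * ((1 + (b : ℝ) / (n.choose 2 : ℝ)) / 2) ^ (k * (k - 1) / 2) < 1) :
    ∃ G : SemicompleteDigraph n, G.biorientedCount = b ∧
      ∀ S : Finset (Fin n), S.card = k → ¬ G.HasTransTournOn S :=
  stmt5_general n k b hb h
end

section
/- Let G be a finite simple graph in which every vertex has at least one neighbor. Then there exists a set S of vertices of G such that the subgraph of G induced by S contains no cycles (is a forest) and |S| ≥ Σ_{v ∈ V(G)} 2/(deg(v)+1), where deg(v) is the degree of v in G and the sum is a real number. -/
/-!
Order the vertices uniformly at random and keep those with at most one earlier neighbour. The kept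
vertices induce a forest, since the latest vertex of a cycle has two earlier neighbours on it. A
vertex `v` is kept exactly when it is among the first two of its closed neighbourhood, which has
`deg v + 1 ≥ 2` elements; by symmetry this happens with probability `2 / (deg v + 1)`, so some
ordering keeps at least the expected number of vertices.
-/

open Finset Function

namespace Finset

variable {α β : Type*} [LinearOrder β]

def orderIndex (f : α → β) (s : Finset α) (a : α) : ℕ := #{b ∈ s | f b < f a}

variable {f : α → β} {s : Finset α} {a b : α}

theorem orderIndex_lt_orderIndex (ha : a ∈ s) (hab : f a < f b) :
    orderIndex f s a < orderIndex f s b := by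
  refine card_lt_card <| (ssubset_iff_of_subset fun c hc ↦ ?_).2 ⟨a, ?_, ?_⟩
  · simp only [mem_filter] at hc ⊢
    exact ⟨hc.1, hc.2.trans hab⟩
  · simp [ha, hab]
  · simp

theorem orderIndex_lt_card (ha : a ∈ s) : orderIndex f s a < #s :=
  card_lt_card <| (ssubset_iff_of_subset (filter_subset _ _)).2 ⟨a, ha, by simp⟩

theorem injOn_orderIndex (hf : Set.InjOn f s) : Set.InjOn (orderIndex f s) s := by
  intro a ha b hb hab
  by_contra hne
  rcases (hf.ne ha hb hne).lt_or_gt with hlt | hlt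
  · exact (orderIndex_lt_orderIndex ha hlt).ne hab
  · exact (orderIndex_lt_orderIndex hb hlt).ne' hab

theorem image_orderIndex (hf : Set.InjOn f s) : s.image (orderIndex f s) = range #s :=
  eq_of_subset_of_card_le
    (image_subset_iff.2 fun _ ha ↦ mem_range.2 (orderIndex_lt_card ha))
    (by rw [card_image_of_injOn (injOn_orderIndex hf), card_range])

theorem card_filter_orderIndex_lt (hf : Set.InjOn f s) {m : ℕ} (hm : m ≤ #s) :
    #{a ∈ s | orderIndex f s a < m} = m := by
  rw [← card_image_of_injOn ((injOn_orderIndex hf).mono (filter_subset _ _)),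
    ← filter_image (p := (· < m)), image_orderIndex hf]
  convert card_range m using 2
  ext
  simp only [mem_filter, mem_range]
  omega

theorem orderIndex_comp_swap [DecidableEq α] {v w : α} (hv : v ∈ s) (hw : w ∈ s) :
    orderIndex (f ∘ Equiv.swap v w) s w = orderIndex f s v := by
  have hmem : ∀ c, Equiv.swap v w c ∈ s ↔ c ∈ s := fun c ↦ by
    rw [Equiv.swap_apply_def]; split_ifs <;> simp_all
  unfold orderIndex
  exact card_nbij' (Equiv.swap v w) (Equiv.swap v w) (fun _ _ ↦ by simp_all)
    (fun _ _ ↦ by simp_all) (fun _ _ ↦ by simp) (fun _ _ ↦ by simp)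

section Equiv

variable [Fintype α] [DecidableEq α] [Fintype β] {v w : α} {m : ℕ}

theorem card_orderIndex_lt_eq (hv : v ∈ s) (hw : w ∈ s) :
    #{σ : α ≃ β | orderIndex σ s v < m} = #{σ : α ≃ β | orderIndex σ s w < m} := by
  refine card_nbij' ((Equiv.swap v w).trans ·) ((Equiv.swap v w).trans ·) ?_ ?_ ?_ ?_
  · intro σ hσ
    simpa [← orderIndex_comp_swap hv hw] using hσ
  · intro σ hσ
    simpa [Equiv.swap_comm v w, ← orderIndex_comp_swap hw hv] using hσ
  all_goals intro σ _; ext; simp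

theorem card_mul_card_orderIndex_lt (hv : v ∈ s) (hm : m ≤ #s) :
    #s * #{σ : α ≃ β | orderIndex σ s v < m} = m * Fintype.card (α ≃ β) := calc
  _ = ∑ w ∈ s, #{σ : α ≃ β | orderIndex σ s w < m} := by
    rw [sum_congr rfl fun w hw ↦ (card_orderIndex_lt_eq hv hw).symm, sum_const, smul_eq_mul]
  _ = ∑ σ : α ≃ β, #{w ∈ s | orderIndex σ s w < m} :=
    sum_card_bipartiteAbove_eq_sum_card_bipartiteBelow _
  _ = ∑ _σ : α ≃ β, m :=
    sum_congr rfl fun σ _ ↦ card_filter_orderIndex_lt σ.injective.injOn hm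
  _ = m * Fintype.card (α ≃ β) := by rw [sum_const, card_univ, smul_eq_mul, mul_comm]

end Equiv

end Finset

namespace SimpleGraph

variable {V β : Type*} [LinearOrder β]

theorem isAcyclic_of_subsingleton_lowerNeighbors (H : SimpleGraph V) (f : V → β)
    (hf : Injective f) (h : ∀ v, {u | H.Adj v u ∧ f u < f v}.Subsingleton) : H.IsAcyclic := by
  classical
  intro x c hc
  obtain ⟨m, hm, hmax⟩ := c.support.toFinset.exists_max_image f ⟨x, by simp⟩
  rw [List.mem_toFinset] at hm
  set c' := c.rotate m hm
  have hc' : c'.IsCycle := hc.rotate hm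
  have hlower : ∀ i, H.Adj m (c'.getVert i) → f (c'.getVert i) < f m := fun i hadj ↦
    (hmax _ <| List.mem_toFinset.2 <| (c.mem_support_rotate_iff m hm).1
      (c'.getVert_mem_support i)).lt_of_ne (hf.ne hadj.ne.symm)
  have hsnd : H.Adj m c'.snd := c'.adj_snd hc'.not_nil
  have hpen : H.Adj m c'.penultimate := (c'.adj_penultimate hc'.not_nil).symm
  exact hc'.snd_ne_penultimate <|
    h m ⟨hsnd, hlower 1 hsnd⟩ ⟨hpen, hlower _ hpen⟩

variable [Fintype V] (G : SimpleGraph V) [DecidableRel G.Adj]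

def backDegree (f : V → β) (v : V) : ℕ := #{u ∈ G.neighborFinset v | f u < f v}

theorem backDegree_eq_orderIndex [DecidableEq V] (f : V → β) (v : V) :
    G.backDegree f v = orderIndex f (insert v (G.neighborFinset v)) v := by
  rw [orderIndex, filter_insert, if_neg (lt_irrefl _), backDegree]

theorem isAcyclic_induce_backDegree_le_one {f : V → β} (hf : Injective f) :
    (G.induce ({v | G.backDegree f v ≤ 1} : Finset V)).IsAcyclic := by
  refine isAcyclic_of_subsingleton_lowerNeighbors _ (f ∘ (↑))
    (hf.comp Subtype.val_injective) fun v a ha b hb ↦ Subtype.ext ?_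
  have hv : G.backDegree f v ≤ 1 := by simpa using v.2
  exact card_le_one.1 hv a (by simpa using ha) b (by simpa using hb)

theorem card_mul_card_backDegree_le_one [DecidableEq V] [Fintype β] {v : V}
    (hv : 0 < G.degree v) :
    (G.degree v + 1) * #{σ : V ≃ β | G.backDegree σ v ≤ 1} =
      2 * Fintype.card (V ≃ β) := by
  have hcard : #(insert v (G.neighborFinset v)) = G.degree v + 1 := by
    rw [card_insert_of_notMem (G.notMem_neighborFinset_self v), card_neighborFinset_eq_degree]
  simp only [← hcard, backDegree_eq_orderIndex, Nat.le_iff_lt_add_one]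
  exact card_mul_card_orderIndex_lt (mem_insert_self v _) (by omega)

theorem sum_card_backDegree_le_one [DecidableEq V] [Fintype β] (hdeg : ∀ v, 0 < G.degree v) :
    ∑ σ : V ≃ β, (#{v | G.backDegree σ v ≤ 1} : ℝ) =
      Fintype.card (V ≃ β) * ∑ v, (2 : ℝ) / (G.degree v + 1) := by
  have hswap : ∑ σ : V ≃ β, #{v | G.backDegree σ v ≤ 1} =
      ∑ v, #{σ : V ≃ β | G.backDegree σ v ≤ 1} :=
    sum_card_bipartiteAbove_eq_sum_card_bipartiteBelow _
  rw [← Nat.cast_sum, hswap, Nat.cast_sum, mul_sum]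
  refine sum_congr rfl fun v _ ↦ ?_
  have h := congrArg (Nat.cast (R := ℝ)) (G.card_mul_card_backDegree_le_one (β := β) (hdeg v))
  push_cast at h
  field_simp
  linarith

end SimpleGraph

theorem stmt7 {V : Type*} [Fintype V] (G : SimpleGraph V) [DecidableRel G.Adj]
    (hdeg : ∀ v, 0 < G.degree v) :
    ∃ S : Finset V, (G.induce (S : Set V)).IsAcyclic ∧
      (∑ v : V, (2 : ℝ) / (G.degree v + 1)) ≤ (S.card : ℝ) := by
  classical
  obtain ⟨σ, -, hσ⟩ := exists_le_of_sum_le ⟨Fintype.equivFin V, mem_univ _⟩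
    (f := fun _ ↦ ∑ v, (2 : ℝ) / (G.degree v + 1))
    (g := fun σ : V ≃ Fin (Fintype.card V) ↦ (#{v | G.backDegree σ v ≤ 1} : ℝ))
    (by rw [sum_const, card_univ, nsmul_eq_mul, G.sum_card_backDegree_le_one hdeg])
  exact ⟨_, G.isAcyclic_induce_backDegree_le_one σ.injective, hσ⟩
end

section
/- Let G be a finite simple graph on n vertices with m edges, where n ≤ m. Then there exists a set S of vertices of G such that the subgraph induced by S is acyclic (a forest) and |S| ≥ 2n²/(2m+n), i.e. |S| ≥ 2n/(2m/n + 1), as real numbers. -/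
/-!
Order the vertices and keep those with at most one earlier neighbour. The kept vertices induce a
forest: on a cycle, the latest vertex has two earlier neighbours. In a uniformly random order, a
vertex of degree `d ≥ 1` is kept exactly when it comes first or second among its closed
neighbourhood, i.e. with probability `2 / (d + 1)`, and an isolated vertex always. This probability
is bounded below by an affine function of `d` that is at least `2 / (t + 1)` at the average
degree `t = 2m/n ≥ 2`, so the expected number of kept vertices is at least
`2n / (t + 1) = 2n² / (2m + n)`, and some order does at least as well. Probabilities are counted
as numbers of bijections `V ≃ Fin n`.
-/

open Finset

section rank

variable {V : Type*} {n : ℕ}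

def rankIn (σ : V ≃ Fin n) (A : Finset V) (v : V) : ℕ :=
  #{u ∈ A | σ u < σ v}

theorem rankIn_lt_rankIn {σ : V ≃ Fin n} {A : Finset V} {v w : V} (hv : v ∈ A)
    (h : σ v < σ w) : rankIn σ A v < rankIn σ A w := by
  refine card_lt_card ⟨fun u hu => ?_, fun hsub => ?_⟩
  · rw [mem_filter] at hu ⊢
    exact ⟨hu.1, hu.2.trans h⟩
  · simpa using hsub (mem_filter.2 ⟨hv, h⟩)

theorem rankIn_injOn (σ : V ≃ Fin n) (A : Finset V) : Set.InjOn (rankIn σ A) A := by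
  intro v hv w hw h
  rcases lt_trichotomy (σ v) (σ w) with hlt | heq | hlt
  · exact absurd h (rankIn_lt_rankIn hv hlt).ne
  · exact σ.injective heq
  · exact absurd h (rankIn_lt_rankIn hw hlt).ne'

theorem image_rankIn (σ : V ≃ Fin n) (A : Finset V) : A.image (rankIn σ A) = range #A := by
  refine eq_of_subset_of_card_le (fun k hk => ?_) ?_
  · obtain ⟨v, hv, rfl⟩ := mem_image.1 hk
    exact mem_range.2 <| card_lt_card ⟨filter_subset _ A, fun h => by simpa using (h hv)⟩
  · rw [card_range, card_image_of_injOn (rankIn_injOn σ A)]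

theorem card_filter_rankIn_eq (σ : V ≃ Fin n) (A : Finset V) {k : ℕ} (hk : k < #A) :
    #{w ∈ A | rankIn σ A w = k} = 1 := by
  obtain ⟨w, hw, rfl⟩ := mem_image.1 (image_rankIn σ A ▸ mem_range.2 hk)
  refine card_eq_one.2 ⟨w, eq_singleton_iff_unique_mem.2 ⟨mem_filter.2 ⟨hw, rfl⟩, fun u hu => ?_⟩⟩
  exact rankIn_injOn σ A (mem_filter.1 hu).1 hw (mem_filter.1 hu).2

variable [DecidableEq V]

theorem rankIn_swap_trans {A : Finset V} {v w : V} (hv : v ∈ A) (hw : w ∈ A)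
    (σ : V ≃ Fin n) :
    rankIn ((Equiv.swap v w).trans σ) A v = rankIn σ A w := by
  refine card_equiv (Equiv.swap v w) fun u => ?_
  have hA : Equiv.swap v w u ∈ A ↔ u ∈ A := by
    rw [Equiv.swap_apply_def]; split_ifs <;> simp_all
  simp [hA]

variable [Fintype V]

theorem card_rankIn_eq_card_rankIn {A : Finset V} {v w : V} (hv : v ∈ A) (hw : w ∈ A)
    (k : ℕ) :
    #{σ : V ≃ Fin n | rankIn σ A v = k} = #{σ : V ≃ Fin n | rankIn σ A w = k} := by
  refine card_nbij' ((Equiv.swap v w).trans ·) ((Equiv.swap v w).trans ·) ?_ ?_ ?_ ?_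
  · intro σ hσ
    simpa [Equiv.swap_comm v w, rankIn_swap_trans hw hv] using hσ
  · intro σ hσ
    simpa [rankIn_swap_trans hv hw] using hσ
  all_goals intro σ _; ext; simp

theorem card_mul_card_rankIn_eq {A : Finset V} {v : V} (hv : v ∈ A) {k : ℕ} (hk : k < #A) :
    #A * #{σ : V ≃ Fin n | rankIn σ A v = k} = Fintype.card (V ≃ Fin n) := by
  calc #A * #{σ : V ≃ Fin n | rankIn σ A v = k}
      = ∑ w ∈ A, #{σ : V ≃ Fin n | rankIn σ A w = k} := by
        rw [sum_congr rfl fun w hw => card_rankIn_eq_card_rankIn hw hv k, sum_const, smul_eq_mul]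
    _ = ∑ σ : V ≃ Fin n, #{w ∈ A | rankIn σ A w = k} :=
        sum_card_bipartiteAbove_eq_sum_card_bipartiteBelow (fun w σ => rankIn σ A w = k)
    _ = Fintype.card (V ≃ Fin n) := by simp [card_filter_rankIn_eq _ A hk]

end rank

/-- The probability that, in a uniformly random ordering, a vertex of degree `d` is preceded by at
most one of its neighbours. -/
noncomputable def fewEarlierProb (d : ℕ) : ℝ :=
  if d = 0 then 1 else 2 / (d + 1)

theorem exists_affine_le_fewEarlierProb {x : ℝ} (hx : 2 ≤ x) :
    ∃ a b : ℝ, 2 / (x + 1) ≤ a + b * x ∧ ∀ d : ℕ, a + b * d ≤ fewEarlierProb d := by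
  rcases le_total x 3 with hx3 | hx3
  · -- the tangent line at `x` exceeds `1` at `d = 0` when `x < 1 + √2`; use the line through
    -- `(0, 1)`, `(2, 2/3)` and `(3, 1/2)` instead
    refine ⟨1, -1 / 6, ?_, fun d => ?_⟩
    · rw [div_le_iff₀ (by linarith)]
      nlinarith
    · rcases Nat.eq_zero_or_pos d with rfl | hd
      · simp [fewEarlierProb]
      -- `1 - d/6 ≤ 2/(d+1)` amounts to `(d - 2)(d - 3) ≥ 0`, true at every integer
      have hd23 : ((d : ℝ) - 2) * (d - 3) ≥ 0 := by
        rcases le_or_gt d 2 with h | h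
        · have : (d : ℝ) ≤ 2 := by exact_mod_cast h
          nlinarith
        · have : (3 : ℝ) ≤ d := by exact_mod_cast h
          nlinarith
      rw [fewEarlierProb, if_neg hd.ne', le_div_iff₀ (by positivity)]
      nlinarith
  · -- the tangent line to the convex function `2/(t+1)` at `t = x`
    refine ⟨2 / (x + 1) + 2 * x / (x + 1) ^ 2, -2 / (x + 1) ^ 2, le_of_eq (by field_simp; ring),
      fun d => ?_⟩
    have hx1 : (0 : ℝ) < x + 1 := by linarith
    rcases Nat.eq_zero_or_pos d with rfl | hd
    · rw [fewEarlierProb, if_pos rfl]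
      field_simp
      nlinarith
    · rw [fewEarlierProb, if_neg hd.ne']
      have hd1 : (0 : ℝ) < d + 1 := by positivity
      rw [← sub_nonneg]
      have key : 2 / ((d : ℝ) + 1) - (2 / (x + 1) + 2 * x / (x + 1) ^ 2 + -2 / (x + 1) ^ 2 * d)
          = 2 * (d - x) ^ 2 / ((d + 1) * (x + 1) ^ 2) := by
        field_simp
        ring
      rw [key]
      positivity

theorem two_mul_card_sq_div_le_sum_fewEarlierProb {ι : Type*} (s : Finset ι) (d : ι → ℕ)
    (h : 2 * #s ≤ ∑ i ∈ s, d i) :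
    2 * (#s : ℝ) ^ 2 / (∑ i ∈ s, (d i : ℝ) + #s) ≤ ∑ i ∈ s, fewEarlierProb (d i) := by
  rcases s.eq_empty_or_nonempty with rfl | hs
  · simp
  set N : ℝ := (#s : ℝ)
  set D : ℝ := ∑ i ∈ s, (d i : ℝ)
  have hN : 0 < N := by simp [N, hs.card_pos]
  have hDN : 2 * N ≤ D := by simp only [N, D]; exact_mod_cast h
  obtain ⟨a, b, hab, hle⟩ := exists_affine_le_fewEarlierProb (x := D / N) (by rwa [le_div_iff₀ hN])
  calc 2 * N ^ 2 / (D + N) = N * (2 / (D / N + 1)) := by field_simp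
    _ ≤ N * (a + b * (D / N)) := by gcongr
    _ = ∑ i ∈ s, (a + b * d i) := by
        rw [sum_add_distrib, ← mul_sum, sum_const, nsmul_eq_mul]
        field_simp
        ring
    _ ≤ ∑ i ∈ s, fewEarlierProb (d i) := sum_le_sum fun i _ => hle (d i)

namespace SimpleGraph

variable {V : Type*}

theorem Walk.IsCycle.exists_two_lower_adj {α : Type*} [LinearOrder α] {f : V → α}
    (hf : Function.Injective f) {G : SimpleGraph V} {u : V} {c : G.Walk u u} (hc : c.IsCycle) :
    ∃ x y z, G.Adj x y ∧ G.Adj x z ∧ y ≠ z ∧ f y < f x ∧ f z < f x := by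
  classical
  obtain ⟨x, hx, hmax⟩ := c.support.toFinset.exists_max_image f ⟨u, by simp⟩
  rw [List.mem_toFinset] at hx
  set c' := c.rotate x hx
  have hc' : c'.IsCycle := hc.rotate hx
  have lower : ∀ {y}, G.Adj x y → y ∈ c'.support → f y < f x := fun hxy hy =>
    (hmax _ (by simpa [c'] using hy)).lt_of_ne (hf.ne hxy.ne')
  exact ⟨x, _, _, c'.adj_snd hc'.not_nil, (c'.adj_penultimate hc'.not_nil).symm,
    hc'.snd_ne_penultimate, lower (c'.adj_snd hc'.not_nil) (c'.getVert_mem_support _),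
    lower (c'.adj_penultimate hc'.not_nil).symm (c'.getVert_mem_support _)⟩

variable [Fintype V] (G : SimpleGraph V) [DecidableRel G.Adj] {n : ℕ}

def earlierNeighborFinset (σ : V ≃ Fin n) (v : V) : Finset V :=
  {u ∈ G.neighborFinset v | σ u < σ v}

def fewEarlierNeighbors (σ : V ≃ Fin n) : Finset V :=
  {v | #(G.earlierNeighborFinset σ v) ≤ 1}

@[simp]
theorem mem_fewEarlierNeighbors (σ : V ≃ Fin n) {v : V} :
    v ∈ G.fewEarlierNeighbors σ ↔ #(G.earlierNeighborFinset σ v) ≤ 1 := by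
  simp [fewEarlierNeighbors]

theorem isAcyclic_induce_fewEarlierNeighbors (σ : V ≃ Fin n) :
    (G.induce (G.fewEarlierNeighbors σ : Set V)).IsAcyclic := by
  intro u c hc
  obtain ⟨x, y, z, hxy, hxz, hyz, hy, hz⟩ :=
    hc.exists_two_lower_adj (σ.injective.comp Subtype.val_injective)
  have hx : #(G.earlierNeighborFinset σ x) ≤ 1 := (G.mem_fewEarlierNeighbors σ).1 x.2
  refine (one_lt_card.2 ⟨y.1, ?_, z.1, ?_, Subtype.val_injective.ne hyz⟩).not_ge hx <;>
    simp only [earlierNeighborFinset, mem_filter, mem_neighborFinset]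
  exacts [⟨hxy, hy⟩, ⟨hxz, hz⟩]

variable [DecidableEq V]

theorem card_earlierNeighborFinset (σ : V ≃ Fin n) (v : V) :
    #(G.earlierNeighborFinset σ v) = rankIn σ (insert v (G.neighborFinset v)) v := by
  simp [rankIn, earlierNeighborFinset, filter_insert]

theorem card_filter_mem_fewEarlierNeighbors (v : V) :
    (#{σ : V ≃ Fin n | v ∈ G.fewEarlierNeighbors σ} : ℝ) =
      Fintype.card (V ≃ Fin n) * fewEarlierProb (G.degree v) := by
  by_cases hd : G.degree v = 0
  · have : ∀ σ : V ≃ Fin n, v ∈ G.fewEarlierNeighbors σ := fun σ =>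
      (G.mem_fewEarlierNeighbors σ).2 <| (card_le_card (filter_subset _ _)).trans (by simp [hd])
    rw [filter_true_of_mem fun σ _ => this σ]
    simp [fewEarlierProb, hd]
  set A := insert v (G.neighborFinset v)
  have hA : #A = G.degree v + 1 := card_insert_of_notMem (G.notMem_neighborFinset_self v)
  have hvA : v ∈ A := mem_insert_self _ _
  have hsplit : #{σ : V ≃ Fin n | v ∈ G.fewEarlierNeighbors σ} =
      #{σ : V ≃ Fin n | rankIn σ A v = 0} + #{σ : V ≃ Fin n | rankIn σ A v = 1} := by
    rw [← card_union_of_disjoint (disjoint_filter.2 fun σ _ h0 h1 => by omega), ← filter_or]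
    congr! 2 with σ
    simp only [mem_fewEarlierNeighbors, card_earlierNeighborFinset, A]
    omega
  have h0 := card_mul_card_rankIn_eq (n := n) hvA (k := 0) (by omega)
  have h1 := card_mul_card_rankIn_eq (n := n) hvA (k := 1) (by omega)
  rw [hA] at h0 h1
  have hpos : (0 : ℝ) < G.degree v + 1 := by positivity
  rw [fewEarlierProb, if_neg hd, hsplit, mul_div_assoc', eq_div_iff hpos.ne']
  exact_mod_cast (by linarith : (_ + _) * (G.degree v + 1) = Fintype.card (V ≃ Fin n) * 2)

theorem sum_card_fewEarlierNeighbors :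
    ∑ σ : V ≃ Fin n, (#(G.fewEarlierNeighbors σ) : ℝ) =
      Fintype.card (V ≃ Fin n) * ∑ v, fewEarlierProb (G.degree v) := by
  rw [mul_sum, ← sum_congr rfl fun v _ => G.card_filter_mem_fewEarlierNeighbors v]
  have := sum_card_bipartiteAbove_eq_sum_card_bipartiteBelow
    (fun σ v => v ∈ G.fewEarlierNeighbors σ) (s := (univ : Finset (V ≃ Fin n))) (t := univ)
  simp only [bipartiteAbove, bipartiteBelow, filter_mem_eq_inter, univ_inter] at this
  exact_mod_cast this

theorem exists_sum_fewEarlierProb_le_card [Nonempty (V ≃ Fin n)] :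
    ∃ σ : V ≃ Fin n, ∑ v, fewEarlierProb (G.degree v) ≤ #(G.fewEarlierNeighbors σ) := by
  have : ∑ _σ : V ≃ Fin n, ∑ v, fewEarlierProb (G.degree v) ≤
      ∑ σ : V ≃ Fin n, (#(G.fewEarlierNeighbors σ) : ℝ) := by
    rw [sum_card_fewEarlierNeighbors, sum_const, card_univ, nsmul_eq_mul]
  obtain ⟨σ, -, hσ⟩ := exists_le_of_sum_le univ_nonempty this
  exact ⟨σ, hσ⟩

end SimpleGraph

theorem stmt8 {V : Type*} [Fintype V] [DecidableEq V] (G : SimpleGraph V)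
    [DecidableRel G.Adj] (n m : ℕ)
    (hn : Fintype.card V = n) (hm : G.edgeFinset.card = m) (hnm : n ≤ m) :
    ∃ S : Finset V, (G.induce (S : Set V)).IsAcyclic ∧
      2 * (n : ℝ) ^ 2 / (2 * (m : ℝ) + (n : ℝ)) ≤ (S.card : ℝ) := by
  have : Nonempty (V ≃ Fin n) := ⟨Fintype.equivFinOfCardEq hn⟩
  have hdeg : ∑ v, G.degree v = 2 * m := by rw [G.sum_degrees_eq_twice_card_edges, hm]
  have hbound := two_mul_card_sq_div_le_sum_fewEarlierProb univ (G.degree ·) (by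
    rw [hdeg, card_univ, hn]; omega)
  rw [← Nat.cast_sum, hdeg, card_univ, hn] at hbound
  obtain ⟨σ, hσ⟩ := G.exists_sum_fewEarlierProb_le_card (n := n)
  push_cast at hbound
  exact ⟨_, G.isAcyclic_induce_fewEarlierNeighbors σ, hbound.trans hσ⟩
end

section
/- Let n and m be positive integers with n ≤ m ≤ C(n,2). Every general two-coloring of the complete graph K_n with exactly m unicolored edges contains a monochromatic clique on at least n²/(m+n) vertices (equivalently, at least n/(m/n + 1) vertices, as real numbers). -/
/-- A general two-coloring of `K_n`: symmetric red/blue predicates such that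
every pair of distinct vertices receives at least one color. -/
structure GenTwoColoring (n : ℕ) where
  red : Fin n → Fin n → Bool
  blue : Fin n → Fin n → Bool
  red_symm : ∀ i j, red i j = red j i
  blue_symm : ∀ i j, blue i j = blue j i
  total : ∀ i j, i ≠ j → red i j = true ∨ blue i j = true

/-- The number of bicolored edges (unordered pairs receiving both colors). -/
def GenTwoColoring.bicoloredCount {n : ℕ} (c : GenTwoColoring n) : ℕ :=
  (Finset.univ.filter fun p : Fin n × Fin n =>
    p.1 < p.2 ∧ c.red p.1 p.2 = true ∧ c.blue p.1 p.2 = true).card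

/-- The number of unicolored edges (unordered pairs receiving exactly one color). -/
def GenTwoColoring.unicoloredCount {n : ℕ} (c : GenTwoColoring n) : ℕ :=
  (Finset.univ.filter fun p : Fin n × Fin n =>
    p.1 < p.2 ∧ ¬(c.red p.1 p.2 = true ∧ c.blue p.1 p.2 = true)).card

/-- `S` is a monochromatic clique: one single color belongs to the color set of
every pair of distinct vertices of `S`. -/
def GenTwoColoring.IsMonoClique {n : ℕ} (c : GenTwoColoring n) (S : Finset (Fin n)) : Prop :=
  (∀ i ∈ S, ∀ j ∈ S, i ≠ j → c.red i j = true) ∨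
  (∀ i ∈ S, ∀ j ∈ S, i ≠ j → c.blue i j = true)

/-!
A color is missing from an edge only if the edge is unicolored in the other color, so the
complements of the red graph and of the blue graph have `m` edges between them, and one of the
two, say the red one, has at most `m / 2`. By Turán's theorem a graph on `n` vertices whose
complement has `e` edges has clique number `ω` with `n² ≤ ω (n + 2e)`; a maximum red clique is
then monochromatic of size at least `n² / (n + m)`.
-/

open Finset Fintype

namespace SimpleGraph

variable {V : Type*} [Fintype V] (G : SimpleGraph V) [DecidableRel G.Adj]

omit [DecidableRel G.Adj] in
theorem cliqueFree_cliqueNum_succ : G.CliqueFree (G.cliqueNum + 1) := fun s hs => by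
  simpa [hs.card_eq] using hs.isClique.card_le_cliqueNum

variable {G} in
theorem CliqueFree.two_mul_mul_card_edgeFinset_le {r : ℕ} (cf : G.CliqueFree (r + 1)) :
    2 * r * #G.edgeFinset ≤ (r - 1) * card V ^ 2 := by
  rcases r.eq_zero_or_pos with rfl | hr
  · simp
  obtain ⟨H, _, maxH⟩ := exists_isTuranMaximal (V := V) hr
  calc 2 * r * #G.edgeFinset ≤ 2 * r * #H.edgeFinset := Nat.mul_le_mul_left _ (maxH.2 cf)
    _ = 2 * r * #(turanGraph (card V) r).edgeFinset := by
      rw [((isTuranMaximal_iff_nonempty_iso_turanGraph hr).mp maxH).some.card_edgeFinset_eq]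
    _ ≤ (r - 1) * card V ^ 2 := mul_card_edgeFinset_turanGraph_le

theorem card_edgeFinset_add_card_edgeFinset_compl [DecidableEq V] :
    #G.edgeFinset + #Gᶜ.edgeFinset = (card V).choose 2 := by
  rw [← card_union_of_disjoint (disjoint_edgeFinset.mpr disjoint_compl_right), ← edgeFinset_sup,
    ← card_edgeFinset_top_eq_card_choose_two]
  congr!
  exact sup_compl_eq_top

theorem sq_card_le_cliqueNum_mul [DecidableEq V] :
    card V ^ 2 ≤ G.cliqueNum * (card V + 2 * #Gᶜ.edgeFinset) := by
  rcases isEmpty_or_nonempty V with hV | hV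
  · simp
  obtain ⟨v⟩ := hV
  have hω : 1 ≤ G.cliqueNum := by
    simpa using IsClique.card_le_cliqueNum (G := G) (t := {v}) (tc := by simp)
  have turan := (G.cliqueFree_cliqueNum_succ).two_mul_mul_card_edgeFinset_le
  have total := G.card_edgeFinset_add_card_edgeFinset_compl
  qify [hω] at turan total ⊢
  rw [Nat.cast_choose_two] at total
  linear_combination turan - (2 * G.cliqueNum : ℚ) * total

theorem exists_isClique_sq_card_div_le {m : ℕ} [DecidableEq V] (h : 2 * #Gᶜ.edgeFinset ≤ m) :
    ∃ S : Finset V, G.IsClique S ∧ (card V : ℝ) ^ 2 / (m + card V) ≤ #S := by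
  obtain ⟨S, hS⟩ := G.exists_isNClique_cliqueNum
  refine ⟨S, hS.isClique, ?_⟩
  have key : card V ^ 2 ≤ #S * (card V + m) := by
    grw [G.sq_card_le_cliqueNum_mul, hS.card_eq, h]
  rcases (card V).eq_zero_or_pos with hV | hV
  · simp [hV]
  rw [div_le_iff₀ (by positivity)]
  exact_mod_cast (add_comm m (card V)) ▸ key

theorem card_edgeFinset_eq_card_filter_lt [LinearOrder V] [Fintype G.edgeSet] :
    #G.edgeFinset = #{p : V × V | p.1 < p.2 ∧ G.Adj p.1 p.2} := by
  refine (card_nbij' (fun e => (e.inf, e.sup)) (fun p => s(p.1, p.2)) ?_ ?_ ?_ ?_)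
  · rintro ⟨a, b⟩ he
    simp only [coe_edgeFinset, Set.mem_ofPred_eq, mem_edgeSet, coe_filter, mem_univ,
      true_and] at he ⊢
    rcases lt_or_gt_of_ne he.ne with h | h
    · simpa [h.le] using ⟨h, he⟩
    · simpa [h.le] using ⟨h, he.symm⟩
  · rintro ⟨a, b⟩ hp
    simp only [coe_filter, mem_univ, true_and, Set.mem_ofPred_eq] at hp
    simpa using hp.2
  · intro e _
    exact Sym2.sortEquiv.left_inv e
  · rintro ⟨a, b⟩ hp
    simp only [coe_filter, mem_univ, true_and, Set.mem_ofPred_eq] at hp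
    simp [hp.1.le]

end SimpleGraph

namespace GenTwoColoring

variable {n : ℕ} (c : GenTwoColoring n)

def redGraph : SimpleGraph (Fin n) where
  Adj i j := i ≠ j ∧ c.red i j = true
  symm := ⟨fun i j h => ⟨h.1.symm, c.red_symm i j ▸ h.2⟩⟩
  loopless := ⟨fun _ h => h.1 rfl⟩

def blueGraph : SimpleGraph (Fin n) where
  Adj i j := i ≠ j ∧ c.blue i j = true
  symm := ⟨fun i j h => ⟨h.1.symm, c.blue_symm i j ▸ h.2⟩⟩
  loopless := ⟨fun _ h => h.1 rfl⟩

instance : DecidableRel c.redGraph.Adj := fun _ _ => inferInstanceAs (Decidable (_ ∧ _))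

instance : DecidableRel c.blueGraph.Adj := fun _ _ => inferInstanceAs (Decidable (_ ∧ _))

theorem unicoloredCount_eq_card_edgeFinset_compl_add :
    c.unicoloredCount = #c.redGraphᶜ.edgeFinset + #c.blueGraphᶜ.edgeFinset := by
  have hdisj : Disjoint c.redGraphᶜ c.blueGraphᶜ := by
    rw [disjoint_iff_inf_le]
    rintro i j ⟨⟨hij, hr⟩, -, hb⟩
    rcases c.total i j hij with h | h
    · exact hr ⟨hij, h⟩
    · exact hb ⟨hij, h⟩
  calc c.unicoloredCount = #(c.redGraphᶜ ⊔ c.blueGraphᶜ).edgeFinset := by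
        rw [SimpleGraph.card_edgeFinset_eq_card_filter_lt, unicoloredCount]
        refine congrArg card (filter_congr fun p _ => and_congr_right fun hp => ?_)
        simp [redGraph, blueGraph, hp.ne, imp_iff_not_or]
    _ = #c.redGraphᶜ.edgeFinset + #c.blueGraphᶜ.edgeFinset := by
        rw [SimpleGraph.edgeFinset_sup,
          card_union_of_disjoint (SimpleGraph.disjoint_edgeFinset.mpr hdisj)]

end GenTwoColoring

theorem stmt12_general (n m : ℕ) (c : GenTwoColoring n) (hc : c.unicoloredCount = m) :
    ∃ S : Finset (Fin n), c.IsMonoClique S ∧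
      (n : ℝ) ^ 2 / ((m : ℝ) + (n : ℝ)) ≤ (S.card : ℝ) := by
  rw [c.unicoloredCount_eq_card_edgeFinset_compl_add] at hc
  rcases le_total #c.redGraphᶜ.edgeFinset #c.blueGraphᶜ.edgeFinset with h | h
  · obtain ⟨S, hS, hcard⟩ := c.redGraph.exists_isClique_sq_card_div_le (m := m) (by omega)
    exact ⟨S, Or.inl fun i hi j hj hij => (hS hi hj hij).2, by simpa using hcard⟩
  · obtain ⟨S, hS, hcard⟩ := c.blueGraph.exists_isClique_sq_card_div_le (m := m) (by omega)
    exact ⟨S, Or.inr fun i hi j hj hij => (hS hi hj hij).2, by simpa using hcard⟩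

theorem stmt12 (n m : ℕ) (hn : 0 < n) (hm : 0 < m) (hnm : n ≤ m)
    (hm2 : m ≤ n.choose 2) (c : GenTwoColoring n) (hc : c.unicoloredCount = m) :
    ∃ S : Finset (Fin n), c.IsMonoClique S ∧
      (n : ℝ) ^ 2 / ((m : ℝ) + (n : ℝ)) ≤ (S.card : ℝ) :=
  stmt12_general n m c hc
end

section
/- Let n and m be positive integers with n ≤ m ≤ C(n,2). Every semicomplete digraph on n vertices with exactly m one-way pairs contains a transitive subtournament on at least 2n²/(2m+n) vertices (equivalently, at least 2n/(2m/n + 1) vertices, as real numbers). -/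
/-! Process the vertices in a uniformly random order and grow a transitive subtournament
greedily: a vertex is appended if every vertex kept so far has an arc to it, prepended if it has
an arc to every vertex kept so far, and discarded otherwise. A vertex is certainly kept if it
precedes all its one-way out-neighbours or all its one-way in-neighbours, so with `d⁺`, `d⁻` its
one-way degrees it is kept with probability at least
`1/(d⁺+1) + 1/(d⁻+1) - 1/(d⁺+d⁻+1) ≥ 2/(d⁺+d⁻+1)` (the last bound fails only for `d⁺ = d⁻ = 0`).
As `∑ (d⁺ + d⁻) = 2m`, convexity of `x ↦ 2/(x+1)` bounds the expected size below by
`n · 2/(2m/n + 1)`; to absorb the vertices without one-way neighbours, the curve is replaced by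
its chord between `⌊2m/n⌋ ≥ 2` and `⌊2m/n⌋ + 1`. Some order does at least as well as the mean. -/

open Finset

namespace List

variable {α : Type*} (r : α → α → Prop) [DecidableRel r]

def extendChain (L : List α) (v : α) : List α :=
  if ∀ u ∈ L, r u v then L ++ [v] else if ∀ u ∈ L, r v u then v :: L else L

def greedyChain (l : List α) : List α := l.foldl (extendChain r) []

variable {r}

theorem pairwise_extendChain {L : List α} (hL : L.Pairwise r) (v : α) :
    (L.extendChain r v).Pairwise r := by
  unfold List.extendChain
  split_ifs with hback hfront
  · exact pairwise_append.2 ⟨hL, pairwise_singleton r v, by simpa using hback⟩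
  · exact pairwise_cons.2 ⟨hfront, hL⟩
  · exact hL

theorem pairwise_foldl_extendChain {L : List α} (hL : L.Pairwise r) (l : List α) :
    (l.foldl (extendChain r) L).Pairwise r := by
  induction l generalizing L with
  | nil => exact hL
  | cons v l ih => exact ih (pairwise_extendChain hL v)

theorem pairwise_greedyChain (l : List α) : (l.greedyChain r).Pairwise r :=
  pairwise_foldl_extendChain Pairwise.nil l

theorem subset_foldl_extendChain (L l : List α) : L ⊆ l.foldl (extendChain r) L := by
  induction l generalizing L with
  | nil => exact Subset.refl L
  | cons v l ih =>
    refine Subset.trans (fun x hx => ?_) (ih _)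
    unfold List.extendChain
    split_ifs <;> simp [hx]

theorem mem_of_mem_foldl_extendChain {L l : List α} {x : α}
    (hx : x ∈ l.foldl (extendChain r) L) : x ∈ L ∨ x ∈ l := by
  induction l generalizing L with
  | nil => exact Or.inl hx
  | cons v l ih =>
    rcases ih hx with hx | hx
    · unfold List.extendChain at hx
      split_ifs at hx <;> grind
    · simp [hx]

theorem mem_greedyChain_of_pairwise {R : α → α → Prop} {l : List α} (hl : l.Pairwise R)
    {v : α} (hv : v ∈ l) (h : (∀ u, R u v → r u v) ∨ (∀ u, R u v → r v u)) :
    v ∈ l.greedyChain r := by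
  obtain ⟨a, b, rfl⟩ := append_of_mem hv
  have hR : ∀ u ∈ a.foldl (extendChain r) [], R u v := fun u hu => by
    rcases mem_of_mem_foldl_extendChain hu with hu | hu
    · simp at hu
    · exact (pairwise_append.1 hl).2.2 u hu v mem_cons_self
  rw [greedyChain, foldl_append, foldl_cons]
  refine subset_foldl_extendChain _ b ?_
  unfold List.extendChain
  split_ifs with hback hfront
  · simp
  · simp
  · rcases h with h | h
    · exact absurd (fun u hu => h u (hR u hu)) hback
    · exact absurd (fun u hu => h u (hR u hu)) hfront

end List

namespace Equiv.Perm

variable {α : Type*} [Fintype α] [LinearOrder α]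

def firstIn (T : Finset α) (v : α) : Finset (Perm α) := {σ | ∀ u ∈ T, σ v ≤ σ u}

theorem card_firstIn_le {T : Finset α} {v w : α} (hv : v ∈ T) (hw : w ∈ T) :
    #(firstIn T v) ≤ #(firstIn T w) := by
  have hswap : ∀ x ∈ T, swap v w x ∈ T := fun x hx => by
    rcases eq_or_ne x v with rfl | hxv
    · simpa
    rcases eq_or_ne x w with rfl | hxw
    · simpa
    · rwa [swap_apply_of_ne_of_ne hxv hxw]
  refine card_le_card_of_injOn (· * swap v w) (fun σ hσ => ?_) (mul_left_injective _).injOn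
  simp only [firstIn, mem_coe, mem_filter, mem_univ, true_and, coe_mul,
    Function.comp_apply, swap_apply_right] at hσ ⊢
  exact fun x hx => hσ _ (hswap x hx)

theorem card_firstIn_mul_card {T : Finset α} {v : α} (hv : v ∈ T) :
    #(firstIn T v) * #T = (Fintype.card α).factorial := by
  have hcover : T.biUnion (firstIn T) = univ := eq_univ_of_forall fun σ => by
    obtain ⟨u, hu, hmin⟩ := T.exists_min_image σ ⟨v, hv⟩
    exact mem_biUnion.2 ⟨u, hu, by simpa [firstIn] using hmin⟩
  have hdisj : (T : Set α).PairwiseDisjoint (firstIn T) := fun u hu w hw huw =>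
    disjoint_left.2 fun σ hσu hσw => by
      simp only [firstIn, mem_filter, mem_univ, true_and] at hσu hσw
      exact huw (σ.injective (le_antisymm (hσu w hw) (hσw u hu)))
  rw [← Fintype.card_perm, ← card_univ, ← hcover, card_biUnion hdisj,
    sum_congr rfl fun u hu => le_antisymm (card_firstIn_le hu hv) (card_firstIn_le hv hu),
    sum_const, smul_eq_mul, mul_comm]

theorem card_firstIn_insert {S : Finset α} {v : α} (hv : v ∉ S) :
    (#(firstIn (insert v S) v) : ℝ) = (Fintype.card α).factorial / (#S + 1) := by
  rw [eq_div_iff (by positivity)]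
  exact_mod_cast card_insert_of_notMem hv ▸ card_firstIn_mul_card (mem_insert_self v S)

end Equiv.Perm

noncomputable section

/-- By inclusion–exclusion, the probability that a vertex with `a` one-way out-neighbours and `b`
one-way in-neighbours comes, in a uniformly random order, before all of the former or before all
of the latter. -/
def greedyWeight (a b : ℕ) : ℝ := 1 / (a + 1) + 1 / (b + 1) - 1 / (a + b + 1)

/-- The chord of the convex function `x ↦ 2 / (x + 1)` between `k` and `k + 1`. -/
def chord (k : ℕ) (x : ℝ) : ℝ := (4 * (k + 1) - 2 * x) / ((k + 1) * (k + 2))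

end

theorem two_div_le_chord {k : ℕ} {x : ℝ} (hk : k ≤ x) (hx : x ≤ k + 1) :
    2 / (x + 1) ≤ chord k x := by
  have hx0 : 0 < x + 1 := by linarith [(Nat.cast_nonneg k : (0 : ℝ) ≤ k)]
  rw [chord, div_le_div_iff₀ hx0 (by positivity)]
  nlinarith [mul_nonneg (sub_nonneg.2 hk) (sub_nonneg.2 hx)]

theorem chord_le_two_div (k s : ℕ) : chord k s ≤ 2 / (s + 1) := by
  have hint : (0 : ℝ) ≤ ((s : ℝ) - k) * ((s : ℝ) - k - 1) := by
    rcases le_or_gt s k with h | h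
    · have : (s : ℝ) ≤ k := by exact_mod_cast h
      nlinarith
    · have : (k : ℝ) + 1 ≤ s := by exact_mod_cast h
      nlinarith
  rw [chord, div_le_div_iff₀ (by positivity) (by positivity)]
  nlinarith

theorem two_div_le_greedyWeight {a b : ℕ} (hab : 1 ≤ a + b) :
    2 / ((a + b : ℕ) + 1 : ℝ) ≤ greedyWeight a b := by
  have hnat : a * b + 1 ≤ a * a + b * b := by
    rcases lt_trichotomy a b with h | rfl | h <;> nlinarith
  have hreal : (a * b + 1 : ℝ) ≤ a * a + b * b := by exact_mod_cast hnat
  rw [greedyWeight, Nat.cast_add, div_add_div _ _ (by positivity) (by positivity),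
    div_sub_div _ _ (by positivity) (by positivity),
    div_le_div_iff₀ (by positivity) (by positivity)]
  nlinarith

theorem chord_le_greedyWeight {k : ℕ} (hk : 2 ≤ k) (a b : ℕ) :
    chord k (a + b : ℕ) ≤ greedyWeight a b := by
  rcases Nat.eq_zero_or_pos (a + b) with hab | hab
  · -- The weight is `1`, not `2 / (0 + 1)`; the chord stays below it only because `k ≥ 2`.
    obtain ⟨rfl, rfl⟩ : a = 0 ∧ b = 0 := by omega
    have hk' : (2 : ℝ) ≤ k := by exact_mod_cast hk
    rw [chord, greedyWeight, div_le_iff₀ (by positivity)]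
    norm_num
    nlinarith
  · exact (chord_le_two_div k _).trans (two_div_le_greedyWeight hab)

theorem sum_chord_eq_card_mul {ι : Type*} [Fintype ι] (k : ℕ) (x : ι → ℝ) :
    ∑ i, chord k (x i) = Fintype.card ι * chord k ((∑ i, x i) / Fintype.card ι) := by
  rcases (Fintype.card ι).eq_zero_or_pos with h | h
  · simp [Fintype.card_eq_zero_iff.1 h]
  simp only [chord, ← sum_div, sum_sub_distrib, ← mul_sum, sum_const, card_univ, nsmul_eq_mul]
  field_simp

theorem le_sum_greedyWeight {ι : Type*} [Fintype ι] (a b : ι → ℕ) (hι : 0 < Fintype.card ι)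
    (h : 2 * Fintype.card ι ≤ ∑ i, (a i + b i)) :
    2 * (Fintype.card ι : ℝ) ^ 2 / ((∑ i, (a i + b i) : ℕ) + Fintype.card ι) ≤
      ∑ i, greedyWeight (a i) (b i) := by
  set N := Fintype.card ι
  set s := ∑ i, (a i + b i)
  set k := s / N
  have hN : (0 : ℝ) < N := by exact_mod_cast hι
  have hk : 2 ≤ k := (Nat.le_div_iff_mul_le hι).2 h
  have hks : (k : ℝ) ≤ s / N := by
    rw [le_div_iff₀ hN]; exact_mod_cast Nat.div_mul_le_self s N
  have hsk : (s : ℝ) / N ≤ k + 1 := by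
    have : (s : ℝ) ≤ k * N + N := by exact_mod_cast (Nat.lt_div_mul_add hι).le
    rw [div_le_iff₀ hN]; linarith
  calc 2 * (N : ℝ) ^ 2 / (s + N) = N * (2 / (s / N + 1)) := by field_simp
    _ ≤ N * chord k (s / N) := by gcongr; exact two_div_le_chord hks hsk
    _ = ∑ i, chord k (a i + b i : ℕ) := by
      rw [sum_chord_eq_card_mul]; simp only [s, N, Nat.cast_sum, Nat.cast_add]
    _ ≤ ∑ i, greedyWeight (a i) (b i) := sum_le_sum fun i _ => chord_le_greedyWeight hk _ _

namespace SemicompleteDigraph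

variable {n : ℕ} (G : SemicompleteDigraph n)

def OneWay (u v : Fin n) : Prop := u ≠ v ∧ ¬(G.arc u v = true ∧ G.arc v u = true)

instance : DecidableRel G.OneWay := fun _ _ => by unfold OneWay; infer_instance

def outNbhd (v : Fin n) : Finset (Fin n) := {u | G.arc v u = true ∧ G.arc u v = false}

def inNbhd (v : Fin n) : Finset (Fin n) := {u | G.arc u v = true ∧ G.arc v u = false}

def oneWayNbhd (v : Fin n) : Finset (Fin n) := {u | G.OneWay u v}

theorem oneWay_comm {u v : Fin n} : G.OneWay u v ↔ G.OneWay v u := by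
  unfold OneWay; grind

theorem sum_card_oneWayNbhd : ∑ v, #(G.oneWayNbhd v) = 2 * G.oneWayCount := by
  let pairsWith (P : Fin n → Fin n → Prop) [DecidableRel P] : Finset (Fin n × Fin n) :=
    {p | P p.1 p.2 ∧ G.OneWay p.1 p.2}
  have hpairs : ∑ v, #(G.oneWayNbhd v) = #(pairsWith fun _ _ => True) := by
    simp only [pairsWith, oneWayNbhd, true_and, card_filter, Fintype.sum_prod_type]
    rw [sum_comm]
  have hsplit : pairsWith (fun _ _ => True) = pairsWith (· < ·) ∪ pairsWith (· > ·) := by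
    ext p
    simp only [pairsWith, mem_filter, mem_univ, true_and, mem_union, OneWay]
    grind
  have hswap : #(pairsWith (· > ·)) = #(pairsWith (· < ·)) :=
    card_nbij' Prod.swap Prod.swap (fun p hp => by simpa [pairsWith, G.oneWay_comm] using hp)
      (fun p hp => by simpa [pairsWith, G.oneWay_comm] using hp) (fun p _ => rfl) (fun p _ => rfl)
  have hcount : #(pairsWith (· < ·)) = G.oneWayCount := by
    simp only [pairsWith, oneWayCount, OneWay]
    congr 1
    ext p
    simp only [mem_filter, mem_univ, true_and]
    grind
  rw [hpairs, hsplit, card_union_of_disjoint, hswap, hcount, two_mul]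
  exact disjoint_filter.2 fun p _ h1 h2 => lt_asymm h1.1 h2.1

theorem notMem_outNbhd_self (v : Fin n) : v ∉ G.outNbhd v := by
  simp [outNbhd, G.loopless]

theorem notMem_inNbhd_self (v : Fin n) : v ∉ G.inNbhd v := by
  simp [inNbhd, G.loopless]

theorem notMem_oneWayNbhd_self (v : Fin n) : v ∉ G.oneWayNbhd v := by
  simp [oneWayNbhd, OneWay]

theorem mem_inNbhd {u v : Fin n} : u ∈ G.inNbhd v ↔ v ∈ G.outNbhd u := by
  simp [inNbhd, outNbhd]

theorem outNbhd_union_inNbhd (v : Fin n) : G.outNbhd v ∪ G.inNbhd v = G.oneWayNbhd v := by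
  ext u
  have := G.total u v
  have := G.loopless v
  simp only [outNbhd, inNbhd, oneWayNbhd, OneWay, mem_union, mem_filter, mem_univ, true_and]
  grind

theorem disjoint_outNbhd_inNbhd (v : Fin n) : Disjoint (G.outNbhd v) (G.inNbhd v) :=
  disjoint_filter.2 fun u _ h1 h2 => by simp [h1.2] at h2

theorem card_outNbhd_add_card_inNbhd (v : Fin n) :
    #(G.outNbhd v) + #(G.inNbhd v) = #(G.oneWayNbhd v) := by
  rw [← card_union_of_disjoint (G.disjoint_outNbhd_inNbhd v), outNbhd_union_inNbhd]

theorem arc_of_notMem_outNbhd {u v : Fin n} (huv : u ≠ v) (hu : u ∉ G.outNbhd v) :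
    G.arc u v = true := by
  have := G.total u v huv
  simp only [outNbhd, mem_filter, mem_univ, true_and] at hu
  grind

def greedyList (σ : Equiv.Perm (Fin n)) : List (Fin n) :=
  (List.ofFn σ.symm).greedyChain fun u v => G.arc u v = true

def greedySet (σ : Equiv.Perm (Fin n)) : Finset (Fin n) := (G.greedyList σ).toFinset

theorem hasTransTournOn_greedySet (σ : Equiv.Perm (Fin n)) :
    G.HasTransTournOn (G.greedySet σ) := by
  have hpair := List.pairwise_greedyChain (r := fun u v => G.arc u v = true) (List.ofFn σ.symm)
  refine ⟨G.greedyList σ, hpair.imp fun {u v} huv h => ?_, rfl, hpair⟩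
  subst h
  simp [G.loopless] at huv

theorem mem_greedySet_of_forall_lt {σ : Equiv.Perm (Fin n)} {v : Fin n}
    (h : (∀ u, σ u < σ v → G.arc u v = true) ∨ (∀ u, σ u < σ v → G.arc v u = true)) :
    v ∈ G.greedySet σ := by
  refine List.mem_toFinset.2 (List.mem_greedyChain_of_pairwise (R := fun u v => σ u < σ v)
    ?_ (List.mem_ofFn.2 ⟨σ v, σ.symm_apply_apply v⟩) h)
  exact List.pairwise_ofFn.2 fun i j hij => by simpa using hij

theorem mem_greedySet_of_firstIn_outNbhd {σ : Equiv.Perm (Fin n)} {v : Fin n}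
    (hσ : σ ∈ Equiv.Perm.firstIn (insert v (G.outNbhd v)) v) : v ∈ G.greedySet σ := by
  simp only [Equiv.Perm.firstIn, mem_filter, mem_univ, true_and, forall_mem_insert, le_refl] at hσ
  refine G.mem_greedySet_of_forall_lt (Or.inl fun u hu => G.arc_of_notMem_outNbhd ?_ fun hmem => ?_)
  · rintro rfl; exact lt_irrefl _ hu
  · exact (hσ u hmem).not_gt hu

theorem mem_greedySet_of_firstIn_inNbhd {σ : Equiv.Perm (Fin n)} {v : Fin n}
    (hσ : σ ∈ Equiv.Perm.firstIn (insert v (G.inNbhd v)) v) : v ∈ G.greedySet σ := by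
  simp only [Equiv.Perm.firstIn, mem_filter, mem_univ, true_and, forall_mem_insert, le_refl] at hσ
  refine G.mem_greedySet_of_forall_lt (Or.inr fun u hu => G.arc_of_notMem_outNbhd ?_ fun hmem => ?_)
  · rintro rfl; exact lt_irrefl _ hu
  · exact (hσ u (G.mem_inNbhd.2 hmem)).not_gt hu

open Equiv.Perm in
theorem factorial_mul_sum_greedyWeight_le :
    (n.factorial : ℝ) * ∑ v, greedyWeight #(G.outNbhd v) #(G.inNbhd v) ≤
      ∑ σ : Equiv.Perm (Fin n), (#(G.greedySet σ) : ℝ) := by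
  let A v := firstIn (insert v (G.outNbhd v)) v
  let B v := firstIn (insert v (G.inNbhd v)) v
  have hinter v : A v ∩ B v = firstIn (insert v (G.oneWayNbhd v)) v := by
    ext σ
    simp [A, B, firstIn, ← G.outNbhd_union_inNbhd, or_imp, forall_and]
  have hcard v :
      (n.factorial : ℝ) * greedyWeight #(G.outNbhd v) #(G.inNbhd v) = #(A v ∪ B v) := by
    have hunion : (#(A v ∪ B v) : ℝ) = #(A v) + #(B v) - #(A v ∩ B v) := by
      rw [eq_sub_iff_add_eq]; exact_mod_cast card_union_add_card_inter (A v) (B v)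
    rw [hunion, hinter, card_firstIn_insert (G.notMem_outNbhd_self v),
      card_firstIn_insert (G.notMem_inNbhd_self v),
      card_firstIn_insert (G.notMem_oneWayNbhd_self v),
      ← G.card_outNbhd_add_card_inNbhd, Fintype.card_fin, greedyWeight]
    push_cast
    ring
  have hsub v : A v ∪ B v ⊆ ({σ | v ∈ G.greedySet σ} : Finset _) := fun σ hσ => by
    rw [mem_filter]
    exact ⟨mem_univ σ, (mem_union.1 hσ).elim G.mem_greedySet_of_firstIn_outNbhd
      G.mem_greedySet_of_firstIn_inNbhd⟩
  calc (n.factorial : ℝ) * ∑ v, greedyWeight #(G.outNbhd v) #(G.inNbhd v)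
      = ∑ v, (#(A v ∪ B v) : ℝ) := by rw [mul_sum]; exact sum_congr rfl fun v _ => hcard v
    _ ≤ ∑ v, (#{σ | v ∈ G.greedySet σ} : ℝ) := by gcongr with v; exact hsub v
    _ = ∑ σ : Equiv.Perm (Fin n), (#(G.greedySet σ) : ℝ) := by
      norm_cast
      simp only [card_filter]
      rw [sum_comm]
      simp

theorem exists_greedySet_card_ge :
    ∃ σ : Equiv.Perm (Fin n),
      ∑ v, greedyWeight #(G.outNbhd v) #(G.inNbhd v) ≤ #(G.greedySet σ) := by
  obtain ⟨σ, -, hσ⟩ := exists_le_of_sum_le univ_nonempty <| by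
    calc ∑ _σ : Equiv.Perm (Fin n), ∑ v, greedyWeight #(G.outNbhd v) #(G.inNbhd v)
        = (n.factorial : ℝ) * ∑ v, greedyWeight #(G.outNbhd v) #(G.inNbhd v) := by
          simp [Fintype.card_perm]
      _ ≤ ∑ σ : Equiv.Perm (Fin n), (#(G.greedySet σ) : ℝ) := G.factorial_mul_sum_greedyWeight_le
  exact ⟨σ, hσ⟩

end SemicompleteDigraph

theorem stmt13_general (n m : ℕ) (hn : 0 < n) (hnm : n ≤ m)
    (G : SemicompleteDigraph n) (hG : G.oneWayCount = m) :
    ∃ S : Finset (Fin n), G.HasTransTournOn S ∧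
      2 * (n : ℝ) ^ 2 / (2 * (m : ℝ) + (n : ℝ)) ≤ (S.card : ℝ) := by
  have hdeg : ∑ v, (#(G.outNbhd v) + #(G.inNbhd v)) = 2 * m := by
    simp only [G.card_outNbhd_add_card_inNbhd, G.sum_card_oneWayNbhd, hG]
  have hbound := le_sum_greedyWeight (fun v => #(G.outNbhd v)) (fun v => #(G.inNbhd v))
    (by simpa using hn) (by simpa [hdeg] using hnm)
  obtain ⟨σ, hσ⟩ := G.exists_greedySet_card_ge
  refine ⟨G.greedySet σ, G.hasTransTournOn_greedySet σ, le_trans ?_ hσ⟩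
  simpa [hdeg] using hbound

theorem stmt13 (n m : ℕ) (hn : 0 < n) (hm : 0 < m) (hnm : n ≤ m)
    (hm2 : m ≤ n.choose 2) (G : SemicompleteDigraph n) (hG : G.oneWayCount = m) :
    ∃ S : Finset (Fin n), G.HasTransTournOn S ∧
      2 * (n : ℝ) ^ 2 / (2 * (m : ℝ) + (n : ℝ)) ≤ (S.card : ℝ) :=
  stmt13_general n m hn hnm G hG
end

section
/- Let k, r, n be positive integers such that r divides n and such that there exists a tournament on r vertices containing no transitive subtournament on k+1 vertices. Then there exists a semicomplete digraph on n vertices with exactly n(r−1)/2 one-way pairs in which every transitive subtournament has at most k·n/r vertices. (In the paper's notation, with r = R⃗(k+1) − 1 and m = n(R⃗(k+1)/2 − 1), this gives F(n,m) ≤ k·n/(R⃗(k+1) − 1).) -/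
/-- A tournament on `{0,…,r-1}`: loopless, and for every pair of distinct
vertices exactly one of the two arcs is present. -/
structure Tournament (r : ℕ) where
  arc : Fin r → Fin r → Bool
  loopless : ∀ i, arc i i = false
  oneOf : ∀ i j, i ≠ j → (arc i j = true ↔ ¬ arc j i = true)

/-- `S` carries a transitive subtournament: there is a linear ordering of `S` such
that the arc `(u,v)` is present whenever `u` precedes `v`. -/
def Tournament.HasTransTournOn {r : ℕ} (T : Tournament r) (S : Finset (Fin r)) : Prop :=
  ∃ l : List (Fin r), l.Nodup ∧ l.toFinset = S ∧
    l.Pairwise fun u v => T.arc u v = true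

open Finset

theorem Finset.two_mul_card_filter_lt_of_symmetric {α : Type*} [Fintype α] [LinearOrder α]
    (P : α → α → Prop) [DecidableRel P] (hP : ∀ a b, P a b → P b a) :
    2 * #{p : α × α | p.1 < p.2 ∧ P p.1 p.2} = #{p : α × α | p.1 ≠ p.2 ∧ P p.1 p.2} := by
  set u : Finset (α × α) := {p | p.1 < p.2 ∧ P p.1 p.2}
  set v : Finset (α × α) := {p | p.2 < p.1 ∧ P p.1 p.2}
  have disj : Disjoint u v := by grind [disjoint_left]
  have union : u ∪ v = ({p : α × α | p.1 ≠ p.2 ∧ P p.1 p.2} : Finset (α × α)) := by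
    ext p
    simp only [u, v, mem_union, mem_filter, mem_univ, true_and]
    grind
  have swap : #u = #v := card_equiv (Equiv.prodComm α α) fun p => by
    simp only [u, v, mem_filter, mem_univ, true_and, Equiv.prodComm_apply,
      Prod.fst_swap, Prod.snd_swap]
    exact and_congr_right fun _ => ⟨hP _ _, hP _ _⟩
  rw [← union, card_union_of_disjoint disj, ← swap, two_mul]

namespace Equiv

variable {α β γ : Type*} [Fintype α] [DecidableEq β] [Fintype γ]

theorem card_filter_fst_eq (e : α ≃ β × γ) (b : β) :
    #{i : α | (e i).1 = b} = Fintype.card γ :=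
  calc #{i : α | (e i).1 = b} = #({b} ×ˢ (univ : Finset γ)) :=
        card_equiv e fun i => by simp [Prod.ext_iff, eq_comm]
    _ = Fintype.card γ := by simp

theorem card_filter_ne_and_fst_eq [DecidableEq α] (e : α ≃ β × γ) :
    #{p : α × α | p.1 ≠ p.2 ∧ (e p.1).1 = (e p.2).1} =
      Fintype.card α * (Fintype.card γ - 1) := by
  rw [card_filter, Fintype.sum_prod_type]
  simp_rw [← card_filter]
  have hrow : ∀ i : α, #{j : α | i ≠ j ∧ (e i).1 = (e j).1} = Fintype.card γ - 1 := fun i => by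
    rw [← e.card_filter_fst_eq (e i).1, ← card_erase_of_mem (a := i) (by simp)]
    congr 1
    ext j
    simp only [mem_filter, mem_univ, true_and, mem_erase]
    grind
  simp [hrow]

end Equiv

namespace Tournament

variable {r : ℕ}

theorem HasTransTournOn.mono {T : Tournament r} {S S' : Finset (Fin r)}
    (h : T.HasTransTournOn S) (hS' : S' ⊆ S) : T.HasTransTournOn S' := by
  obtain ⟨l, hnd, rfl, hpw⟩ := h
  refine ⟨l.filter (· ∈ S'), hnd.filter _, ?_, hpw.sublist List.filter_sublist⟩
  ext x
  simpa using fun hx => List.mem_toFinset.mp (hS' hx)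

theorem card_le_of_hasTransTournOn {T : Tournament r} {k : ℕ}
    (hT : ∀ S : Finset (Fin r), S.card = k + 1 → ¬ T.HasTransTournOn S)
    {S : Finset (Fin r)} (hS : T.HasTransTournOn S) : S.card ≤ k := by
  by_contra! hk
  obtain ⟨S', hS'S, hcard⟩ := exists_subset_card_eq hk
  exact hT S' hcard (hS.mono hS'S)

variable {n : ℕ} {β : Type*} [DecidableEq β] (T : Tournament r) (e : Fin n ≃ β × Fin r)

/-- Vertex `i` is vertex `(e i).2` of the copy `(e i).1` of `T`; vertices in different copies
are joined in both directions. -/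
def copies : SemicompleteDigraph n where
  arc i j := if (e i).1 = (e j).1 then T.arc (e i).2 (e j).2 else true
  loopless i := by simp [T.loopless]
  total i j hij := by
    by_cases hb : (e i).1 = (e j).1
    · have hpos : (e i).2 ≠ (e j).2 := fun h => hij (e.injective (Prod.ext hb h))
      have := T.oneOf _ _ hpos
      simp only [hb, if_true]
      cases h : T.arc (e i).2 (e j).2 <;> simp_all
    · simp [hb]

theorem copies_arc_of_fst_eq {i j : Fin n} (h : (e i).1 = (e j).1) :
    (T.copies e).arc i j = T.arc (e i).2 (e j).2 := if_pos h

theorem copies_arc_of_fst_ne {i j : Fin n} (h : (e i).1 ≠ (e j).1) :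
    (T.copies e).arc i j = true := if_neg h

theorem copies_bioriented_iff {i j : Fin n} (hij : i ≠ j) :
    ((T.copies e).arc i j = true ∧ (T.copies e).arc j i = true) ↔ (e i).1 ≠ (e j).1 := by
  refine ⟨fun ⟨hij', hji⟩ hb => ?_, fun hb => ⟨T.copies_arc_of_fst_ne e hb,
    T.copies_arc_of_fst_ne e (Ne.symm hb)⟩⟩
  have hpos : (e i).2 ≠ (e j).2 := fun h => hij (e.injective (Prod.ext hb h))
  rw [T.copies_arc_of_fst_eq e hb] at hij'
  rw [T.copies_arc_of_fst_eq e hb.symm] at hji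
  exact (T.oneOf _ _ hpos).mp hij' hji

theorem copies_oneWayCount [Fintype β] : (T.copies e).oneWayCount = n * (r - 1) / 2 := by
  have hsame : (T.copies e).oneWayCount =
      #{p : Fin n × Fin n | p.1 < p.2 ∧ (e p.1).1 = (e p.2).1} :=
    congrArg card <| filter_congr fun p _ =>
      and_congr_right fun hlt => by rw [T.copies_bioriented_iff e hlt.ne, not_not]
  have hpairs :=
    two_mul_card_filter_lt_of_symmetric (fun i j : Fin n => (e i).1 = (e j).1) fun _ _ => Eq.symm
  rw [e.card_filter_ne_and_fst_eq, Fintype.card_fin, Fintype.card_fin] at hpairs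
  omega

theorem hasTransTournOn_image_of_copies {S : Finset (Fin n)}
    (hS : (T.copies e).HasTransTournOn S) (b : β) :
    T.HasTransTournOn ({i ∈ S | (e i).1 = b}.image fun i => (e i).2) := by
  obtain ⟨l, hnd, rfl, hpw⟩ := hS
  have hblock : ∀ i ∈ l.filter (fun i => (e i).1 = b), (e i).1 = b := fun i hi => by
    simpa using (List.mem_filter.mp hi).2
  refine ⟨(l.filter fun i => (e i).1 = b).map fun i => (e i).2, ?_, ?_, ?_⟩
  · exact (hnd.filter _).map_on fun i hi j hj h =>
      e.injective (Prod.ext ((hblock i hi).trans (hblock j hj).symm) h)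
  · ext x
    simp
  · refine List.pairwise_map.mpr <| (hpw.sublist List.filter_sublist).imp_of_mem ?_
    intro i j hi hj hij
    rwa [T.copies_arc_of_fst_eq e ((hblock i hi).trans (hblock j hj).symm)] at hij

theorem card_le_of_copies_hasTransTournOn [Fintype β] {k : ℕ}
    (hT : ∀ S : Finset (Fin r), S.card = k + 1 → ¬ T.HasTransTournOn S)
    {S : Finset (Fin n)} (hS : (T.copies e).HasTransTournOn S) :
    S.card ≤ Fintype.card β * k := by
  have hblock : ∀ b, #{i ∈ S | (e i).1 = b} ≤ k := fun b => by
    rw [← card_image_of_injOn fun i hi j hj h => e.injective (Prod.ext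
      ((mem_filter.mp hi).2.trans (mem_filter.mp hj).2.symm) h)]
    exact card_le_of_hasTransTournOn hT (T.hasTransTournOn_image_of_copies e hS b)
  calc S.card = ∑ b, #{i ∈ S | (e i).1 = b} :=
        card_eq_sum_card_fiberwise fun _ _ => mem_univ _
    _ ≤ ∑ _b : β, k := sum_le_sum fun b _ => hblock b
    _ = Fintype.card β * k := by simp

end Tournament

theorem stmt14_general (k r n : ℕ) (hdvd : r ∣ n)
    (hT : ∃ T : Tournament r, ∀ S : Finset (Fin r), S.card = k + 1 →
      ¬ T.HasTransTournOn S) :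
    ∃ G : SemicompleteDigraph n, G.oneWayCount = n * (r - 1) / 2 ∧
      ∀ S : Finset (Fin n), G.HasTransTournOn S → S.card ≤ k * n / r := by
  obtain ⟨T, hTk⟩ := hT
  let e : Fin n ≃ Fin (n / r) × Fin r :=
    Fintype.equivOfCardEq (by simp [Nat.div_mul_cancel hdvd])
  refine ⟨T.copies e, T.copies_oneWayCount e, fun S hS => ?_⟩
  calc S.card ≤ Fintype.card (Fin (n / r)) * k :=
        T.card_le_of_copies_hasTransTournOn e hTk hS
    _ = k * n / r := by rw [Fintype.card_fin, Nat.mul_div_assoc _ hdvd, mul_comm]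

theorem stmt14 (k r n : ℕ) (hk : 0 < k) (hr : 0 < r) (hn : 0 < n) (hdvd : r ∣ n)
    (hT : ∃ T : Tournament r, ∀ S : Finset (Fin r), S.card = k + 1 →
      ¬ T.HasTransTournOn S) :
    ∃ G : SemicompleteDigraph n, G.oneWayCount = n * (r - 1) / 2 ∧
      ∀ S : Finset (Fin n), G.HasTransTournOn S → S.card ≤ k * n / r :=
  stmt14_general k r n hdvd hT
end

section
/- Let C and n be positive integers such that (C+1) divides n and (C+1)² ≤ n. Then there exists a general two-coloring of the complete graph K_n with exactly C·n unicolored edges in which every monochromatic clique has at most n/(C+1) vertices. (That is, f(n, m) ≤ n/(m/n + 1) for m = C·n.) -/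
/-! Write `n = (C + 1) k` with `k ≥ C + 1` and view the vertices as a `k × (C + 1)` grid. The rows
and the wrapped diagonals `r + a (mod k)` are two partitions into `k` classes of size `C + 1`, and
a row meets a diagonal in at most one vertex because `C + 1 ≤ k`. Colour a pair red when it lies in
different rows and blue when it lies in different diagonals: the unicoloured pairs are exactly those
inside a row or inside a diagonal, `C n / 2` of each kind, and a monochromatic clique meets every row
(resp. every diagonal) at most once, so it has at most `k = n / (C + 1)` vertices. -/
open Finset Function

section PairCounting

variable {V β : Type*} [Fintype V] [DecidableEq β]

theorem two_mul_card_filter_lt_of_symm [LinearOrder V] {Q : V → V → Prop} [DecidableRel Q]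
    (hQ : ∀ a b, Q a b → Q b a) :
    2 * #{p : V × V | p.1 < p.2 ∧ Q p.1 p.2} = #{p : V × V | p.1 ≠ p.2 ∧ Q p.1 p.2} := by
  have hsplit : univ.filter (fun p : V × V => p.1 ≠ p.2 ∧ Q p.1 p.2)
      = univ.filter (fun p : V × V => p.1 < p.2 ∧ Q p.1 p.2) ∪
          univ.filter (fun p : V × V => p.2 < p.1 ∧ Q p.1 p.2) := by
    rw [← filter_or]
    exact filter_congr fun p _ => by rw [ne_iff_lt_or_gt, or_and_right]
  have hdisj : Disjoint (univ.filter fun p : V × V => p.1 < p.2 ∧ Q p.1 p.2)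
      (univ.filter fun p : V × V => p.2 < p.1 ∧ Q p.1 p.2) :=
    disjoint_filter.2 fun _ _ h h' => lt_asymm h.1 h'.1
  have hswap : #{p : V × V | p.2 < p.1 ∧ Q p.1 p.2} = #{p : V × V | p.1 < p.2 ∧ Q p.1 p.2} :=
    card_equiv (Equiv.prodComm V V) fun p => by
      simpa using and_congr_right fun _ => ⟨hQ _ _, hQ _ _⟩
  rw [hsplit, card_union_of_disjoint hdisj, hswap, two_mul]

theorem card_filter_ne_and_eq_of_card_fiber [DecidableEq V] (f : V → β) {m : ℕ}
    (hf : ∀ v, #{w | f w = f v} = m + 1) :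
    #{p : V × V | p.1 ≠ p.2 ∧ f p.1 = f p.2} = Fintype.card V * m := by
  have hrow : ∀ v, #{w | v ≠ w ∧ f v = f w} = m := fun v => by
    have : ({w | v ≠ w ∧ f v = f w} : Finset V) = ({w | f w = f v} : Finset V).erase v := by
      ext w
      simp only [mem_filter, mem_erase, mem_univ, true_and]
      exact ⟨fun h => ⟨Ne.symm h.1, h.2.symm⟩, fun h => ⟨Ne.symm h.1, h.2.symm⟩⟩
    rw [this, card_erase_of_mem (by simp), hf v, Nat.add_sub_cancel]
  rw [card_filter, Fintype.sum_prod_type]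
  simp only [← card_filter, hrow, sum_const, card_univ, smul_eq_mul]

theorem two_mul_card_filter_lt_and_eq_of_card_fiber [LinearOrder V] (f : V → β) {m : ℕ}
    (hf : ∀ v, #{w | f w = f v} = m + 1) :
    2 * #{p : V × V | p.1 < p.2 ∧ f p.1 = f p.2} = Fintype.card V * m :=
  (two_mul_card_filter_lt_of_symm (Q := fun a b => f a = f b) fun _ _ => Eq.symm).trans
    (card_filter_ne_and_eq_of_card_fiber f hf)

theorem card_fiber_of_bijective_fst {α γ : Type*} [Fintype α] [Fintype γ] (φ : α × γ → β)
    (hφ : ∀ c, Bijective fun a => φ (a, c)) (b : β) :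
    #{x | φ x = b} = Fintype.card γ := by
  have hcol : ∀ c, #{a | φ (a, c) = b} = 1 := fun c => by
    obtain ⟨a, ha, huniq⟩ := (hφ c).existsUnique b
    exact card_eq_one.2 ⟨a, by ext a'; simpa using ⟨huniq a', fun h => h ▸ ha⟩⟩
  rw [card_filter, Fintype.sum_prod_type, sum_comm]
  simp only [← card_filter, hcol, sum_const, card_univ, smul_eq_mul, mul_one]

end PairCounting

namespace GenTwoColoring

variable {n : ℕ} {β : Type*} [DecidableEq β]

def ofPartitions (f g : Fin n → β) (hfg : Injective fun i => (f i, g i)) : GenTwoColoring n where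
  red i j := decide (f i ≠ f j)
  blue i j := decide (g i ≠ g j)
  red_symm i j := by simp only [ne_comm]
  blue_symm i j := by simp only [ne_comm]
  total i j hij := by
    by_contra! h
    simp only [ne_eq, decide_eq_true_eq, not_not] at h
    exact hij (hfg (Prod.ext h.1 h.2))

variable {f g : Fin n → β} {hfg : Injective fun i => (f i, g i)}

theorem unicoloredCount_ofPartitions :
    (ofPartitions f g hfg).unicoloredCount =
      #{p : Fin n × Fin n | p.1 < p.2 ∧ f p.1 = f p.2} +
        #{p : Fin n × Fin n | p.1 < p.2 ∧ g p.1 = g p.2} := by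
  rw [unicoloredCount, ← card_union_of_disjoint]
  · congr 1
    ext p
    simp only [ofPartitions, mem_union, mem_filter, mem_univ, true_and, ne_eq, decide_eq_true_eq]
    tauto
  · refine disjoint_filter.2 fun p _ h h' => h.1.ne (hfg ?_)
    exact Prod.ext h.2 h'.2

theorem IsMonoClique.card_le_ofPartitions [Fintype β] {S : Finset (Fin n)}
    (hS : (ofPartitions f g hfg).IsMonoClique S) : #S ≤ Fintype.card β := by
  have card_le_of_pairwise_ne : ∀ h : Fin n → β, (∀ i ∈ S, ∀ j ∈ S, i ≠ j → decide (h i ≠ h j) = true) →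
      #S ≤ Fintype.card β := fun h hS =>
    card_le_card_of_injOn h (fun _ _ => mem_coe.2 (mem_univ _)) fun i hi j hj hij => by
      by_contra hne
      simpa [hij] using hS i hi j hj hne
  rcases hS with hS | hS
  exacts [card_le_of_pairwise_ne f hS, card_le_of_pairwise_ne g hS]

end GenTwoColoring

theorem Fin.injective_fst_add_castLE {k m : ℕ} [NeZero k] (h : m ≤ k) :
    Injective fun x : Fin k × Fin m => (x.1, x.1 + Fin.castLE h x.2) := by
  rintro ⟨r, a⟩ ⟨r', a'⟩ hx
  simp only [Prod.mk.injEq] at hx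
  obtain ⟨rfl, hx⟩ := hx
  simpa using hx

theorem stmt15_general (C n : ℕ) (hdvd : (C + 1) ∣ n)
    (hsq : (C + 1) ^ 2 ≤ n) :
    ∃ c : GenTwoColoring n, c.unicoloredCount = C * n ∧
      ∀ S : Finset (Fin n), c.IsMonoClique S → S.card ≤ n / (C + 1) := by
  obtain ⟨k, rfl⟩ := hdvd
  have hCk : C + 1 ≤ k := Nat.le_of_mul_le_mul_left (by rwa [← sq]) C.succ_pos
  have : NeZero k := ⟨by omega⟩
  let e : Fin ((C + 1) * k) ≃ Fin k × Fin (C + 1) :=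
    (finCongr (mul_comm _ _)).trans finProdFinEquiv.symm
  let row : Fin k × Fin (C + 1) → Fin k := Prod.fst
  let diag : Fin k × Fin (C + 1) → Fin k := fun x => x.1 + Fin.castLE hCk x.2
  have hfiber : ∀ φ : Fin k × Fin (C + 1) → Fin k, (∀ a, Bijective fun r => φ (r, a)) →
      ∀ v, #{w | φ (e w) = φ (e v)} = C + 1 := fun φ hφ v => by
    rw [card_equiv e (t := {x | φ x = φ (e v)}) fun _ => by simp, card_fiber_of_bijective_fst φ hφ,
      Fintype.card_fin]
  refine ⟨GenTwoColoring.ofPartitions (row ∘ e) (diag ∘ e)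
    ((Fin.injective_fst_add_castLE hCk).comp e.injective), ?_, fun S hS => ?_⟩
  · have hrow := two_mul_card_filter_lt_and_eq_of_card_fiber (row ∘ e)
      (hfiber row fun _ => bijective_id)
    have hdiag := two_mul_card_filter_lt_and_eq_of_card_fiber (diag ∘ e)
      (hfiber diag fun a => (Equiv.addRight (Fin.castLE hCk a)).bijective)
    rw [Fintype.card_fin] at hrow hdiag
    rw [GenTwoColoring.unicoloredCount_ofPartitions]
    linarith
  · simpa [Nat.mul_div_cancel_left _ C.succ_pos] using hS.card_le_ofPartitions

theorem stmt15 (C n : ℕ) (hC : 0 < C) (hn : 0 < n) (hdvd : (C + 1) ∣ n)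
    (hsq : (C + 1) ^ 2 ≤ n) :
    ∃ c : GenTwoColoring n, c.unicoloredCount = C * n ∧
      ∀ S : Finset (Fin n), c.IsMonoClique S → S.card ≤ n / (C + 1) :=
  stmt15_general C n hdvd hsq
end

section
/- Let n and k be integers with 2 ≤ k ≤ n. If e · (1 + Σ_{j=2}^{k} C(k,j)·C(n−k, k−j)) · k! · 2^{−k(k−1)/2} < 1 (where e is Euler's number and the inequality is over the reals), then there exists a tournament on n vertices containing no transitive subtournament on k vertices. (This is the Lovász Local Lemma step in the proof of Theorem 4.2, using that each k-set event has probability k!/2^{C(k,2)} and depends on at most Σ_{j=2}^{k} C(k,j)·C(n−k,k−j) other such events; it yields F(n) < 2log₂ n − 1 + o(1).) -/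
/-!
Orient every edge of the complete graph on `Fin n` independently and uniformly at random. A fixed
`k`-set spans a transitive subtournament with probability at most `k! / 2 ^ C(k,2)` (one of `k!`
orderings, each of which forces all `C(k,2)` edges inside the set). This event is determined by the
edges inside the set, so it is mutually independent of the events of all `k`-sets meeting the set
in at most one vertex, and at most `∑_{j=2}^k C(k,j) C(n-k,k-j)` sets meet it in two or more
vertices. The symmetric Lovász Local Lemma then leaves a tournament with no transitive `k`-set.

The local lemma is proved by counting in the uniform cube `κ → Bool`: with `x = 1/(d+1)`, strong
induction on `S` shows that at most an `x`-fraction of the assignments avoiding the events of `S`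
lie in `A i`. The events of `S` sharing no coordinate with `A i` are independent of it, and
avoiding each of the at most `d` others shrinks the count by a factor of at most `1 - x`.
-/

open Finset
open scoped Nat

section BoolCube

variable {κ : Type*} [Fintype κ] [DecidableEq κ]

theorem card_mul_two_pow_le_of_eqOn {E : Finset (κ → Bool)} {I : Finset κ}
    (hE : ∀ f ∈ E, ∀ g ∈ E, ∀ x ∈ I, f x = g x) :
    #E * 2 ^ #I ≤ 2 ^ Fintype.card κ := by
  have hinj : Set.InjOn (fun (f : κ → Bool) (x : {x // x ∉ I}) => f x) E := by
    intro f hf g hg hfg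
    funext x
    by_cases hx : x ∈ I
    · exact hE f hf g hg x hx
    · exact congrFun hfg ⟨x, hx⟩
  have hcard : #E ≤ 2 ^ (Fintype.card κ - #I) := by
    simpa [Fintype.card_subtype_compl] using
      card_le_card_of_injOn _ (fun f _ => mem_univ _) hinj
  calc #E * 2 ^ #I ≤ 2 ^ (Fintype.card κ - #I) * 2 ^ #I := by gcongr
    _ = 2 ^ Fintype.card κ := by rw [← pow_add, Nat.sub_add_cancel (card_le_univ I)]

theorem card_inter_mul_two_pow_eq {A B : Finset (κ → Bool)} {I J : Finset κ}
    (hA : DependsOn (· ∈ A) (I : Set κ)) (hB : DependsOn (· ∈ B) (J : Set κ))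
    (hIJ : Disjoint I J) :
    #(A ∩ B) * 2 ^ Fintype.card κ = #A * #B := by
  let swap (u : (κ → Bool) × (κ → Bool)) := (I.piecewise u.1 u.2, I.piecewise u.2 u.1)
  have swap_swap (u) : swap (swap u) = u := by
    ext x <;> by_cases hx : x ∈ I <;> simp [swap, hx]
  have eqOn_I (f g : κ → Bool) : ∀ x ∈ (I : Set κ), I.piecewise f g x = f x :=
    fun _ hx => piecewise_eq_of_mem _ _ _ hx
  have eqOn_J (f g : κ → Bool) : ∀ x ∈ (J : Set κ), I.piecewise f g x = g x :=
    fun _ hx => piecewise_eq_of_notMem _ _ _ (disjoint_right.mp hIJ hx)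
  have key : #((A ∩ B) ×ˢ (univ : Finset (κ → Bool))) = #(A ×ˢ B) := by
    refine card_nbij' swap swap ?_ ?_ (fun u _ => swap_swap u) (fun u _ => swap_swap u)
    · rintro ⟨c, w⟩ hc
      simp only [coe_product, Set.mem_prod, mem_coe, mem_inter] at hc ⊢
      exact ⟨(hA (eqOn_I c w)).mpr hc.1.1, (hB (eqOn_J w c)).mpr hc.1.2⟩
    · rintro ⟨a, b⟩ hab
      simp only [coe_product, Set.mem_prod, mem_coe, mem_inter, coe_univ, Set.mem_univ,
        and_true] at hab ⊢
      exact ⟨(hA (eqOn_I a b)).mpr hab.1, (hB (eqOn_J a b)).mpr hab.2⟩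
  simpa [card_product] using key

end BoolCube

theorem one_le_exp_one_mul_one_sub_pow (d : ℕ) : 1 ≤ Real.exp 1 * (1 - 1 / (d + 1)) ^ d := by
  have hbase : (1 - 1 / (d + 1 : ℝ)) ^ d = ((1 + (d : ℝ)⁻¹) ^ d)⁻¹ := by
    rcases Nat.eq_zero_or_pos d with rfl | hd
    · simp
    · rw [← inv_pow]; congr 1; field_simp; ring
  rw [hbase, ← div_eq_mul_inv, one_le_div (by positivity)]
  exact Real.one_add_inv_pow_le_exp

section LocalLemma

variable {κ ι : Type*} [Fintype κ] [DecidableEq κ] (A : ι → Finset (κ → Bool))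

def avoiding (S : Finset ι) : Finset (κ → Bool) :=
  univ.filter fun f => ∀ j ∈ S, f ∉ A j

theorem mem_avoiding {S : Finset ι} {f : κ → Bool} :
    f ∈ avoiding A S ↔ ∀ j ∈ S, f ∉ A j := by
  simp [avoiding]

theorem avoiding_empty : avoiding A ∅ = univ := by
  simp [avoiding]

theorem avoiding_anti {S T : Finset ι} (h : S ⊆ T) : avoiding A T ⊆ avoiding A S :=
  fun _ hf => (mem_avoiding A).2 fun j hj => (mem_avoiding A).1 hf j (h hj)

theorem inter_avoiding_eq_empty {S : Finset ι} {i : ι} (hi : i ∈ S) :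
    A i ∩ avoiding A S = ∅ :=
  eq_empty_of_forall_notMem fun _ hf =>
    (mem_avoiding A).1 (mem_inter.1 hf).2 i hi (mem_inter.1 hf).1

theorem dependsOn_mem_avoiding {C : ι → Finset κ}
    (hdep : ∀ i, DependsOn (· ∈ A i) (C i : Set κ)) (S : Finset ι) :
    DependsOn (· ∈ avoiding A S) (S.biUnion C : Set κ) := by
  intro f g hfg
  simp only [mem_avoiding]
  refine propext <| forall₂_congr fun j hj => not_congr (iff_of_eq (hdep j fun x hx => hfg x ?_))
  simpa using ⟨j, hj, hx⟩

variable [DecidableEq ι]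

theorem card_avoiding_insert_add (S : Finset ι) (j : ι) :
    #(avoiding A (insert j S)) + #(A j ∩ avoiding A S) = #(avoiding A S) := by
  have : avoiding A (insert j S) = avoiding A S \ A j := by
    ext f; simp only [mem_avoiding, mem_sdiff, forall_mem_insert]; tauto
  rw [this, inter_comm, card_sdiff_add_card_inter]

theorem one_sub_pow_mul_card_avoiding_le {x : ℝ} (hx : x ≤ 1) (T : Finset ι) {U : Finset ι}
    (h : ∀ V ⊆ U, ∀ j ∈ U \ V,
      (#(A j ∩ avoiding A (T ∪ V)) : ℝ) ≤ x * #(avoiding A (T ∪ V))) :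
    (1 - x) ^ #U * #(avoiding A T) ≤ #(avoiding A (T ∪ U)) := by
  induction U using Finset.induction_on with
  | empty => simp
  | insert j U hjU ih =>
    have hU := ih fun V hV i hi =>
      h V (hV.trans (subset_insert _ _)) i (sdiff_subset_sdiff (subset_insert _ _) le_rfl hi)
    have hj := h U (subset_insert _ _) j (by simp [hjU])
    have hcard : (#(avoiding A (insert j (T ∪ U))) : ℝ) + #(A j ∩ avoiding A (T ∪ U))
        = #(avoiding A (T ∪ U)) := by exact_mod_cast card_avoiding_insert_add A (T ∪ U) j
    rw [union_insert, card_insert_of_notMem hjU, pow_succ']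
    calc (1 - x) * (1 - x) ^ #U * #(avoiding A T)
        ≤ (1 - x) * #(avoiding A (T ∪ U)) := by
          rw [mul_assoc]; exact mul_le_mul_of_nonneg_left hU (by linarith)
      _ ≤ #(avoiding A (insert j (T ∪ U))) := by linarith

variable [Fintype ι] {A} {C : ι → Finset κ} {d : ℕ} {x : ℝ}

theorem card_inter_avoiding_le (hx0 : 0 ≤ x) (hx1 : x ≤ 1)
    (hdep : ∀ i, DependsOn (· ∈ A i) (C i : Set κ))
    (hdeg : ∀ i, #{j | j ≠ i ∧ ¬Disjoint (C i) (C j)} ≤ d)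
    (hA : ∀ i, (#(A i) : ℝ) ≤ x * (1 - x) ^ d * 2 ^ Fintype.card κ)
    (S : Finset ι) (i : ι) :
    (#(A i ∩ avoiding A S) : ℝ) ≤ x * #(avoiding A S) := by
  induction S using Finset.strongInduction generalizing i with | H S ih =>
  by_cases hiS : i ∈ S
  · rw [inter_avoiding_eq_empty A hiS, card_empty, Nat.cast_zero]
    positivity
  set S₁ := S.filter fun j => ¬Disjoint (C i) (C j)
  set S₂ := S.filter fun j => Disjoint (C i) (C j)
  have hS₁ : #S₁ ≤ d := by
    refine (card_le_card fun j hj => ?_).trans (hdeg i)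
    obtain ⟨hjS, hij⟩ := mem_filter.1 hj
    exact mem_filter.2 ⟨mem_univ _, fun h => hiS (h ▸ hjS), hij⟩
  have hindep : (#(A i ∩ avoiding A S₂) : ℝ) * 2 ^ Fintype.card κ
      = #(A i) * #(avoiding A S₂) := by
    exact_mod_cast card_inter_mul_two_pow_eq (hdep i) (dependsOn_mem_avoiding A hdep S₂)
      ((disjoint_biUnion_right _ _ _).2 fun j hj => (mem_filter.1 hj).2)
  have hpeel : (1 - x) ^ #S₁ * #(avoiding A S₂) ≤ #(avoiding A S) := by
    rw [← filter_union_filter_not_eq (fun j => Disjoint (C i) (C j)) S]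
    refine one_sub_pow_mul_card_avoiding_le A hx1 S₂ fun V hV j hj => ih _ ?_ j
    obtain ⟨hjS₁, hjV⟩ := mem_sdiff.1 hj
    have hsub : S₂ ∪ V ⊆ S := union_subset (filter_subset _ _) (hV.trans (filter_subset _ _))
    refine (ssubset_iff_of_subset hsub).2 ⟨j, (mem_filter.1 hjS₁).1, ?_⟩
    simp [S₂, hjV, (mem_filter.1 hjS₁).2]
  have hpow : (1 - x) ^ d ≤ (1 - x) ^ #S₁ :=
    pow_le_pow_of_le_one (by linarith) (by linarith) hS₁
  calc (#(A i ∩ avoiding A S) : ℝ)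
      ≤ #(A i ∩ avoiding A S₂) := by
        exact_mod_cast card_le_card (inter_subset_inter_left (avoiding_anti A (filter_subset _ _)))
    _ ≤ x * (1 - x) ^ d * #(avoiding A S₂) := by
        refine le_of_mul_le_mul_right ?_ (by positivity : (0 : ℝ) < 2 ^ Fintype.card κ)
        rw [hindep, mul_right_comm]
        exact mul_le_mul_of_nonneg_right (hA i) (by positivity)
    _ ≤ x * ((1 - x) ^ #S₁ * #(avoiding A S₂)) := by
        rw [mul_assoc]; gcongr
    _ ≤ x * #(avoiding A S) := by gcongr

theorem lovasz_local_lemma (hx0 : 0 ≤ x) (hx1 : x < 1)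
    (hdep : ∀ i, DependsOn (· ∈ A i) (C i : Set κ))
    (hdeg : ∀ i, #{j | j ≠ i ∧ ¬Disjoint (C i) (C j)} ≤ d)
    (hA : ∀ i, (#(A i) : ℝ) ≤ x * (1 - x) ^ d * 2 ^ Fintype.card κ) :
    ∃ f : κ → Bool, ∀ i, f ∉ A i := by
  have hpos (S : Finset ι) : 0 < #(avoiding A S) := by
    induction S using Finset.induction_on with
    | empty => simp [avoiding_empty]
    | insert j S _ ih =>
      have hbound := card_inter_avoiding_le hx0 hx1.le hdep hdeg hA S j
      have hcard : (#(avoiding A (insert j S)) : ℝ) + #(A j ∩ avoiding A S)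
          = #(avoiding A S) := by exact_mod_cast card_avoiding_insert_add A S j
      have : (0 : ℝ) < #(avoiding A S) := by exact_mod_cast ih
      exact_mod_cast (by nlinarith : (0 : ℝ) < #(avoiding A (insert j S)))
  obtain ⟨f, hf⟩ := card_pos.1 (hpos univ)
  exact ⟨f, fun i => (mem_avoiding A).1 hf i (mem_univ i)⟩

theorem lovasz_local_lemma_of_exp_mul_le {p : ℝ} (hd : 1 ≤ d)
    (hdep : ∀ i, DependsOn (· ∈ A i) (C i : Set κ))
    (hdeg : ∀ i, #{j | j ≠ i ∧ ¬Disjoint (C i) (C j)} ≤ d)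
    (hA : ∀ i, (#(A i) : ℝ) ≤ p * 2 ^ Fintype.card κ) (hp : Real.exp 1 * p * (d + 1) ≤ 1) :
    ∃ f : κ → Bool, ∀ i, f ∉ A i := by
  have hx1 : 1 / (d + 1 : ℝ) < 1 := by
    rw [div_lt_one (by positivity)]
    exact_mod_cast Nat.lt_succ_of_le hd
  refine lovasz_local_lemma (by positivity) hx1 hdep hdeg fun i => ?_
  refine (hA i).trans (mul_le_mul_of_nonneg_right ?_ (by positivity))
  have hp0 : 0 ≤ p := nonneg_of_mul_nonneg_left ((Nat.cast_nonneg _).trans (hA i)) (by positivity)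
  have hx : 1 / (d + 1 : ℝ) * (d + 1) = 1 := by field_simp
  calc p ≤ p * (Real.exp 1 * (1 - 1 / (d + 1)) ^ d) :=
        le_mul_of_one_le_right hp0 (one_le_exp_one_mul_one_sub_pow d)
    _ = Real.exp 1 * p * (d + 1) * (1 / (d + 1) * (1 - 1 / (d + 1)) ^ d) := by
        linear_combination (Real.exp 1 * p * (1 - 1 / (d + 1)) ^ d) * hx.symm
    _ ≤ 1 / (d + 1) * (1 - 1 / (d + 1)) ^ d :=
        mul_le_of_le_one_left (by have := pow_nonneg (sub_nonneg.2 hx1.le) d; positivity) hp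

end LocalLemma

theorem two_le_card_inter_iff_not_disjoint_powersetCard {α : Type*} [DecidableEq α]
    {s t : Finset α} : 2 ≤ #(s ∩ t) ↔ ¬Disjoint (s.powersetCard 2) (t.powersetCard 2) := by
  rw [not_disjoint_iff]
  constructor
  · intro h
    obtain ⟨c, hc⟩ := powersetCard_nonempty.2 h
    obtain ⟨hcst, hc2⟩ := mem_powersetCard.1 hc
    exact ⟨c, mem_powersetCard.2 ⟨hcst.trans inter_subset_left, hc2⟩,
      mem_powersetCard.2 ⟨hcst.trans inter_subset_right, hc2⟩⟩
  · rintro ⟨c, hs, ht⟩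
    obtain ⟨hcs, hc2⟩ := mem_powersetCard.1 hs
    exact hc2 ▸ card_le_card (subset_inter hcs (mem_powersetCard.1 ht).1)

section Intersections

variable {α : Type*} [Fintype α] [DecidableEq α] {k : ℕ}

theorem card_filter_card_inter_eq_le {S : Finset α} (hS : #S = k) (j : ℕ) :
    #{T : {T : Finset α // #T = k} | #(S ∩ T.1) = j}
      ≤ k.choose j * (Fintype.card α - k).choose (k - j) := by
  have hmaps : ∀ T ∈ ({T : {T : Finset α // #T = k} | #(S ∩ T.1) = j} : Finset _),
      (S ∩ T.1, T.1 \ S) ∈ S.powersetCard j ×ˢ Sᶜ.powersetCard (k - j) := by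
    intro T hT
    have hj := (mem_filter.1 hT).2
    simp only [mem_product, mem_powersetCard]
    refine ⟨⟨inter_subset_left, hj⟩, fun x hx => mem_compl.2 (mem_sdiff.1 hx).2, ?_⟩
    rw [card_sdiff, T.2, hj]
  have hinj : Set.InjOn (fun T : {T : Finset α // #T = k} => (S ∩ T.1, T.1 \ S)) Set.univ :=
    fun T _ T' _ h => Subtype.ext <| by
      obtain ⟨h₁, h₂⟩ := Prod.ext_iff.1 h
      rw [← sdiff_union_inter T.1 S, ← sdiff_union_inter T'.1 S, inter_comm T.1,
        inter_comm T'.1]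
      exact congrArg₂ (· ∪ ·) h₂ h₁
  calc _ ≤ #(S.powersetCard j ×ˢ Sᶜ.powersetCard (k - j)) :=
        card_le_card_of_injOn _ hmaps (hinj.mono (Set.subset_univ _))
    _ = _ := by rw [card_product, card_powersetCard, card_powersetCard, card_compl, hS]

theorem card_filter_not_disjoint_powersetCard_two_le (S : {T : Finset α // #T = k}) :
    #{T | T ≠ S ∧ ¬Disjoint (S.1.powersetCard 2) (T.1.powersetCard 2)}
      ≤ ∑ j ∈ Icc 2 k, k.choose j * (Fintype.card α - k).choose (k - j) := by
  calc _ ≤ #((Icc 2 k).biUnion fun j =>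
          {T : {T : Finset α // #T = k} | #(S.1 ∩ T.1) = j}) := by
        refine card_le_card fun T hT => ?_
        have h2 := two_le_card_inter_iff_not_disjoint_powersetCard.2 (mem_filter.1 hT).2.2
        have hk : #(S.1 ∩ T.1) ≤ k := (card_le_card inter_subset_left).trans_eq S.2
        exact mem_biUnion.2 ⟨_, mem_Icc.2 ⟨h2, hk⟩, mem_filter.2 ⟨mem_univ _, rfl⟩⟩
    _ ≤ _ := card_biUnion_le
    _ ≤ _ := sum_le_sum fun j _ => card_filter_card_inter_eq_le S.2 j

end Intersections

namespace Tournament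

variable {n : ℕ}

theorem arc_eq_arc_of_pairwise {T T' : Tournament n} {l : List (Fin n)}
    (h : l.Pairwise fun u v => T.arc u v = true) (h' : l.Pairwise fun u v => T'.arc u v = true)
    {u v : Fin n} (hu : u ∈ l) (hv : v ∈ l) : T.arc u v = T'.arc u v := by
  obtain rfl | huv := eq_or_ne u v
  · rw [T.loopless, T'.loopless]
  let R (a b : Fin n) : Prop := (T.arc a b ∧ T'.arc a b) ∨ (T.arc b a ∧ T'.arc b a)
  have : Std.Symm R := ⟨fun _ _ => Or.symm⟩
  have hR : l.Pairwise R := (h.and h').imp Or.inl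
  rcases hR.forall hu hv huv with ⟨hT, hT'⟩ | ⟨hT, hT'⟩
  · rw [hT, hT']
  · rw [Bool.eq_false_iff.2 ((T.oneOf v u huv.symm).1 hT),
      Bool.eq_false_iff.2 ((T'.oneOf v u huv.symm).1 hT')]

theorem HasTransTournOn.of_arc_eq {T T' : Tournament n} {S : Finset (Fin n)}
    (h : ∀ u ∈ S, ∀ v ∈ S, T.arc u v = T'.arc u v) (hT : T.HasTransTournOn S) :
    T'.HasTransTournOn S := by
  obtain ⟨l, hnd, rfl, hl⟩ := hT
  refine ⟨l, hnd, rfl, hl.imp_of_mem fun hu hv huv => ?_⟩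
  rwa [← h _ (List.mem_toFinset.2 hu) _ (List.mem_toFinset.2 hv)]

def ofOrientation (f : Finset (Fin n) → Bool) : Tournament n where
  arc i j := if i < j then f {i, j} else if j < i then !f {i, j} else false
  loopless i := by simp
  oneOf i j hij := by
    rcases hij.lt_or_gt with h | h <;> simp [h, h.not_gt, pair_comm i j]

theorem ofOrientation_arc_of_lt {f : Finset (Fin n) → Bool} {i j : Fin n} (h : i < j) :
    (ofOrientation f).arc i j = f {i, j} := by
  simp [ofOrientation, h]

theorem ofOrientation_arc_eq {f g : Finset (Fin n) → Bool} {S : Finset (Fin n)}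
    (hfg : ∀ c ∈ S.powersetCard 2, f c = g c) {u v : Fin n} (hu : u ∈ S) (hv : v ∈ S) :
    (ofOrientation f).arc u v = (ofOrientation g).arc u v := by
  obtain rfl | huv := eq_or_ne u v
  · rw [loopless, loopless]
  have : {u, v} ∈ S.powersetCard 2 :=
    mem_powersetCard.2 ⟨insert_subset hu (singleton_subset_iff.2 hv), card_pair huv⟩
  simp only [ofOrientation, hfg _ this]

theorem eq_of_pairwise_ofOrientation_arc {f g : Finset (Fin n) → Bool} {l : List (Fin n)}
    (hf : l.Pairwise fun u v => (ofOrientation f).arc u v = true)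
    (hg : l.Pairwise fun u v => (ofOrientation g).arc u v = true)
    {c : Finset (Fin n)} (hc : c ∈ l.toFinset.powersetCard 2) : f c = g c := by
  obtain ⟨hcl, hc2⟩ := mem_powersetCard.1 hc
  obtain ⟨u, v, huv, rfl⟩ := card_eq_two.1 hc2
  have hu := List.mem_toFinset.1 (hcl (mem_insert_self u _))
  have hv := List.mem_toFinset.1 (hcl (mem_insert_of_mem (mem_singleton_self v)))
  rcases huv.lt_or_gt with h | h
  · simpa [ofOrientation_arc_of_lt h] using arc_eq_arc_of_pairwise hf hg hu hv
  · simpa [ofOrientation_arc_of_lt h, pair_comm] using arc_eq_arc_of_pairwise hf hg hv hu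

open scoped Classical in
noncomputable def transEvent (S : Finset (Fin n)) : Finset (Finset (Fin n) → Bool) :=
  univ.filter fun f => (ofOrientation f).HasTransTournOn S

theorem mem_transEvent {S : Finset (Fin n)} {f : Finset (Fin n) → Bool} :
    f ∈ transEvent S ↔ (ofOrientation f).HasTransTournOn S := by
  simp [transEvent]

theorem dependsOn_mem_transEvent (S : Finset (Fin n)) :
    DependsOn (· ∈ transEvent S) (S.powersetCard 2 : Set (Finset (Fin n))) := by
  intro f g hfg
  refine propext ⟨fun hf => mem_transEvent.2 ?_, fun hg => mem_transEvent.2 ?_⟩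
  · exact (mem_transEvent.1 hf).of_arc_eq fun u hu v hv => ofOrientation_arc_eq hfg hu hv
  · exact (mem_transEvent.1 hg).of_arc_eq fun u hu v hv => (ofOrientation_arc_eq hfg hu hv).symm

theorem card_transEvent_mul_le (S : Finset (Fin n)) :
    #(transEvent S) * 2 ^ (#S).choose 2 ≤ (#S)! * 2 ^ Fintype.card (Finset (Fin n)) := by
  set orders := S.toList.permutations.toFinset
  let E (l : List (Fin n)) : Finset (Finset (Fin n) → Bool) :=
    univ.filter fun f => l.Pairwise fun u v => (ofOrientation f).arc u v = true
  have hsub : transEvent S ⊆ orders.biUnion E := by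
    intro f hf
    obtain ⟨l, hnd, rfl, hl⟩ := mem_transEvent.1 hf
    refine mem_biUnion.2 ⟨l, ?_, mem_filter.2 ⟨mem_univ _, hl⟩⟩
    rw [List.mem_toFinset, List.mem_permutations]
    exact List.perm_of_nodup_nodup_toFinset_eq hnd (nodup_toList _) (toList_toFinset _).symm
  have hE : ∀ l ∈ orders, #(E l) * 2 ^ (#S).choose 2 ≤ 2 ^ Fintype.card (Finset (Fin n)) := by
    intro l hl
    have hlS : l.toFinset = S := by
      rw [List.toFinset_eq_of_perm _ _ (List.mem_permutations.1 (List.mem_toFinset.1 hl)),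
        toList_toFinset]
    rw [← card_powersetCard, ← hlS]
    exact card_mul_two_pow_le_of_eqOn fun f hf g hg c hc =>
      eq_of_pairwise_ofOrientation_arc (mem_filter.1 hf).2 (mem_filter.1 hg).2 hc
  have horders : #orders = (#S)! := by
    rw [List.toFinset_card_of_nodup (List.nodup_permutations _ (nodup_toList S)),
      List.length_permutations, length_toList]
  calc #(transEvent S) * 2 ^ (#S).choose 2
      ≤ (∑ l ∈ orders, #(E l)) * 2 ^ (#S).choose 2 := by
        gcongr; exact (card_le_card hsub).trans card_biUnion_le
    _ ≤ ∑ _l ∈ orders, 2 ^ Fintype.card (Finset (Fin n)) := by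
        rw [sum_mul]; exact sum_le_sum hE
    _ = (#S)! * 2 ^ Fintype.card (Finset (Fin n)) := by
        rw [sum_const, horders, smul_eq_mul]

end Tournament

theorem stmt17_general (n k : ℕ) (hk : 2 ≤ k)
    (h : Real.exp 1 *
        (1 + ∑ j ∈ Finset.Icc 2 k, ((k.choose j * (n - k).choose (k - j) : ℕ) : ℝ)) *
        (k.factorial : ℝ) / 2 ^ (k * (k - 1) / 2) < 1) :
    ∃ T : Tournament n, ∀ S : Finset (Fin n), S.card = k →
      ¬ T.HasTransTournOn S := by
  have hd : 1 ≤ ∑ j ∈ Icc 2 k, k.choose j * (n - k).choose (k - j) := by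
    simpa using single_le_sum (f := fun j => k.choose j * (n - k).choose (k - j))
      (fun _ _ => Nat.zero_le _) (mem_Icc.2 ⟨hk, le_rfl⟩)
  have hA (S : {S : Finset (Fin n) // #S = k}) : (#(Tournament.transEvent S.1) : ℝ)
      ≤ k ! / 2 ^ k.choose 2 * 2 ^ Fintype.card (Finset (Fin n)) := by
    have := Tournament.card_transEvent_mul_le S.1
    rw [S.2] at this
    rw [div_mul_eq_mul_div, le_div_iff₀ (by positivity)]
    exact_mod_cast this
  have hp : Real.exp 1 * (k ! / 2 ^ k.choose 2) *
      ((∑ j ∈ Icc 2 k, k.choose j * (n - k).choose (k - j) : ℕ) + 1) ≤ 1 := by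
    refine Eq.trans_le ?_ h.le
    rw [Nat.choose_two_right, Nat.cast_sum]
    ring
  obtain ⟨f, hf⟩ := lovasz_local_lemma_of_exp_mul_le
    (A := fun S : {S : Finset (Fin n) // #S = k} => Tournament.transEvent S.1)
    (C := fun S => S.1.powersetCard 2) hd
    (fun S => Tournament.dependsOn_mem_transEvent S.1)
    (fun S => by simpa using card_filter_not_disjoint_powersetCard_two_le S) hA hp
  exact ⟨Tournament.ofOrientation f, fun S hS hT =>
    hf ⟨S, hS⟩ (Tournament.mem_transEvent.2 hT)⟩

theorem stmt17 (n k : ℕ) (hk : 2 ≤ k) (hkn : k ≤ n)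
    (h : Real.exp 1 *
        (1 + ∑ j ∈ Finset.Icc 2 k, ((k.choose j * (n - k).choose (k - j) : ℕ) : ℝ)) *
        (k.factorial : ℝ) / 2 ^ (k * (k - 1) / 2) < 1) :
    ∃ T : Tournament n, ∀ S : Finset (Fin n), S.card = k →
      ¬ T.HasTransTournOn S :=
  stmt17_general n k hk h
end
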